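/- arXiv:math/0410491 — 8 statements merged into one kernel-verified Lean document; each statement's English description precedes it below -/
import Mathlib

section
/- Let A1, A2 be sets with A1 ∩ A2 = {a}, and let K1, K2 be positive definite (complex-valued) kernels on A1 and A2 respectively with unit diagonal, i.e. K1(a1,a1) = K2(a2,a2) = 1 for all a1 ∈ A1, a2 ∈ A2. Then the Markov product K on A1 ∪ A2, defined by K|_{Aj×Aj} = Kj, K(a1,a2) = K1(a1,a) K2(a,a2) for a1 ∈ A1, a2 ∈ A2, and K(a2,a1) = conj(K(a1,a2)), is a positive definite kernel on A1 ∪ A2. -/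
open scoped ComplexConjugate ComplexOrder

/-- A kernel `K` is positive definite on a set `A`: every finite matrix
`[K(x_i, x_j)]` with points from `A` is positive semidefinite. -/
def IsPosDefKernelOn {S : Type*} (A : Set S) (K : S → S → ℂ) : Prop :=
  ∀ (n : ℕ) (x : Fin n → S), (∀ i, x i ∈ A) → ∀ c : Fin n → ℂ,
    0 ≤ ∑ i, ∑ j, conj (c i) * K (x i) (x j) * c j

lemma diag_real {S : Type*} {A : Set S} {K : S → S → ℂ} (h : IsPosDefKernelOn A K)
    {x : S} (hx : x ∈ A) : (K x x).im = 0 := by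
  have := h 1 ![x] (by simp [hx]) ![1]
  simp [Fin.sum_univ_one] at this
  rw [Complex.le_def] at this
  simpa using this.2.symm

lemma herm {S : Type*} {A : Set S} {K : S → S → ℂ} (h : IsPosDefKernelOn A K)
    {x y : S} (hx : x ∈ A) (hy : y ∈ A) : K y x = conj (K x y) := by
  have hxx := diag_real h hx
  have hyy := diag_real h hy
  have h1 := h 2 ![x, y] (by intro i; fin_cases i <;> simp [hx, hy]) ![1, 1]
  have h2 := h 2 ![x, y] (by intro i; fin_cases i <;> simp [hx, hy]) ![1, Complex.I]
  simp [Fin.sum_univ_two] at h1 h2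
  rw [Complex.le_def] at h1 h2
  have e1 := h1.2.symm
  have e2 := h2.2.symm
  simp [Complex.add_im, Complex.mul_im, hxx, hyy, Complex.conj_im, Complex.conj_re] at e1 e2
  apply Complex.ext <;> simp [Complex.conj_re, Complex.conj_im] <;> linarith

lemma schur {S : Type*} {A : Set S} {K : S → S → ℂ} (h : IsPosDefKernelOn A K)
    {a : S} (ha : a ∈ A) (hd : K a a = 1) (n : ℕ) (y : Fin n → S) (hy : ∀ i, y i ∈ A)
    (c : Fin n → ℂ) :
    0 ≤ ∑ i, ∑ j, conj (c i) * (K (y i) (y j) - K (y i) a * K a (y j)) * c j := by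
  set s : ℂ := ∑ j, K a (y j) * c j with hs
  have key := h (n + 1) (Fin.snoc y a) (by
      intro i
      refine Fin.lastCases ?_ ?_ i
      · simpa using ha
      · intro i; simpa using hy i) (Fin.snoc c (-s))
  have hT : ∑ i, conj (c i) * K (y i) a = conj s := by
    rw [hs, map_sum]
    refine Finset.sum_congr rfl fun i _ => ?_
    rw [map_mul, herm h ha (hy i)]
    ring
  have expand : (∑ i, ∑ j, conj ((Fin.snoc c (-s) : Fin (n+1) → ℂ) i) *
      K ((Fin.snoc y a : Fin (n+1) → S) i) ((Fin.snoc y a : Fin (n+1) → S) j) *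
      (Fin.snoc c (-s) : Fin (n+1) → ℂ) j)
      = (∑ i, ∑ j, conj (c i) * K (y i) (y j) * c j) - conj s * s := by
    rw [Fin.sum_univ_castSucc]
    simp only [Fin.snoc_castSucc, Fin.snoc_last]
    have inner : ∀ i : Fin n, (∑ j : Fin (n+1), conj (c i) *
        K (y i) ((Fin.snoc y a : Fin (n+1) → S) j) * (Fin.snoc c (-s) : Fin (n+1) → ℂ) j)
        = (∑ j, conj (c i) * K (y i) (y j) * c j) + conj (c i) * K (y i) a * (-s) := by
      intro i
      rw [Fin.sum_univ_castSucc]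
      simp only [Fin.snoc_castSucc, Fin.snoc_last]
    rw [Finset.sum_congr rfl fun i _ => inner i]
    rw [Fin.sum_univ_castSucc]
    simp only [Fin.snoc_castSucc, Fin.snoc_last, hd]
    rw [Finset.sum_add_distrib, ← Finset.sum_mul, hT]
    have : ∑ j : Fin n, conj (-s) * K a (y j) * c j = conj (-s) * s := by
      rw [hs, Finset.mul_sum]
      exact Finset.sum_congr rfl fun j _ => by ring
    rw [this]
    ring
  rw [expand] at key
  have goal_eq : (∑ i, ∑ j, conj (c i) * (K (y i) (y j) - K (y i) a * K a (y j)) * c j)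
      = (∑ i, ∑ j, conj (c i) * K (y i) (y j) * c j) - conj s * s := by
    rw [← hT, Finset.sum_mul, ← Finset.sum_sub_distrib]
    refine Finset.sum_congr rfl fun i _ => ?_
    calc ∑ j, conj (c i) * (K (y i) (y j) - K (y i) a * K a (y j)) * c j
        = ∑ j, (conj (c i) * K (y i) (y j) * c j
            - conj (c i) * K (y i) a * (K a (y j) * c j)) :=
          Finset.sum_congr rfl fun j _ => by ring
      _ = _ := by rw [Finset.sum_sub_distrib, ← Finset.mul_sum, ← hs]
  rw [goal_eq]
  exact key

/-- The Markov product of two positive definite kernels with unit diagonal, on sets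
intersecting in the single point `a`, is positive definite. -/
theorem stmt5 {S : Type*} (A₁ A₂ : Set S) (a : S) (hinter : A₁ ∩ A₂ = {a})
    (K₁ K₂ K : S → S → ℂ)
    (h₁ : IsPosDefKernelOn A₁ K₁) (h₂ : IsPosDefKernelOn A₂ K₂)
    (hdiag₁ : ∀ x ∈ A₁, K₁ x x = 1) (hdiag₂ : ∀ x ∈ A₂, K₂ x x = 1)
    (hK₁ : ∀ x ∈ A₁, ∀ y ∈ A₁, K x y = K₁ x y)
    (hK₂ : ∀ x ∈ A₂, ∀ y ∈ A₂, K x y = K₂ x y)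
    (hcross : ∀ x ∈ A₁, ∀ y ∈ A₂, K x y = K₁ x a * K₂ a y)
    (hconj : ∀ x ∈ A₁, ∀ y ∈ A₂, K y x = conj (K x y)) :
    IsPosDefKernelOn (A₁ ∪ A₂) K := by
  classical
  have ha : a ∈ A₁ ∩ A₂ := by rw [hinter]; exact rfl
  have ha₁ : a ∈ A₁ := ha.1
  have ha₂ : a ∈ A₂ := ha.2
  intro n x hx c
  set y₁ : Fin n → S := fun i => if x i ∈ A₁ then x i else a with hy₁
  set c₁ : Fin n → ℂ := fun i => if x i ∈ A₁ then c i else 0 with hc₁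
  set y₂ : Fin n → S := fun i => if x i ∈ A₁ then a else x i with hy₂
  set c₂ : Fin n → ℂ := fun i => if x i ∈ A₁ then 0 else c i with hc₂
  set v : Fin n → ℂ := fun i => conj (c i) * (if x i ∈ A₁ then K₁ (x i) a else K₂ (x i) a)
    with hv
  have hx₂ : ∀ i, x i ∉ A₁ → x i ∈ A₂ := fun i hi => (hx i).resolve_left hi
  have key : ∀ i j, conj (c i) * K (x i) (x j) * c j
      = conj (c₁ i) * (K₁ (y₁ i) (y₁ j) - K₁ (y₁ i) a * K₁ a (y₁ j)) * c₁ j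
      + conj (c₂ i) * (K₂ (y₂ i) (y₂ j) - K₂ (y₂ i) a * K₂ a (y₂ j)) * c₂ j
      + v i * conj (v j) := by
    intro i j
    simp only [hy₁, hc₁, hy₂, hc₂, hv]
    by_cases hi : x i ∈ A₁ <;> by_cases hj : x j ∈ A₁ <;>
      simp only [hi, hj, if_true, if_false, map_zero, zero_mul, mul_zero, add_zero, zero_add,
        map_mul, Complex.conj_conj]
    · rw [hK₁ _ hi _ hj, ← herm h₁ hj ha₁]
      ring
    · rw [hcross _ hi _ (hx₂ j hj), ← herm h₂ (hx₂ j hj) ha₂]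
      ring
    · rw [hconj _ hj _ (hx₂ i hi), hcross _ hj _ (hx₂ i hi), map_mul,
        ← herm h₂ ha₂ (hx₂ i hi)]
      ring
    · rw [hK₂ _ (hx₂ i hi) _ (hx₂ j hj), ← herm h₂ (hx₂ j hj) ha₂]
      ring
  calc (0:ℂ) ≤ (∑ i, ∑ j, conj (c₁ i) * (K₁ (y₁ i) (y₁ j) - K₁ (y₁ i) a * K₁ a (y₁ j)) * c₁ j)
      + (∑ i, ∑ j, conj (c₂ i) * (K₂ (y₂ i) (y₂ j) - K₂ (y₂ i) a * K₂ a (y₂ j)) * c₂ j)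
      + (∑ i, ∑ j, v i * conj (v j)) := by
        have t1 := schur h₁ ha₁ (hdiag₁ a ha₁) n y₁
          (fun i => by rw [hy₁]; dsimp only; split <;> [assumption; exact ha₁]) c₁
        have t2 := schur h₂ ha₂ (hdiag₂ a ha₂) n y₂
          (fun i => by rw [hy₂]; dsimp only; split <;> [exact ha₂; exact hx₂ i (by assumption)]) c₂
        have t3 : (0:ℂ) ≤ ∑ i, ∑ j, v i * conj (v j) := by
          have : (∑ i, ∑ j, v i * conj (v j)) = (∑ i, v i) * conj (∑ j, v j) := by
            rw [map_sum, Finset.sum_mul_sum]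
          rw [this, Complex.mul_conj]
          exact_mod_cast Complex.normSq_nonneg _
        have := add_le_add (add_le_add t1 t2) t3
        simpa using this
    _ = ∑ i, ∑ j, conj (c i) * K (x i) (x j) * c j := by
        rw [← Finset.sum_add_distrib, ← Finset.sum_add_distrib]
        refine Finset.sum_congr rfl fun i _ => ?_
        rw [← Finset.sum_add_distrib, ← Finset.sum_add_distrib]
        exact Finset.sum_congr rfl fun j _ => (key i j).symm
end

section
/- Let t_1, ..., t_N be complex numbers in the open unit disk. Define t_σ for a reduced word σ in the free group F_N multiplicatively via t_{i^k} = t_i^k for k ≥ 0 and t_{i^{-k}} = conj(t_i)^k, extended to products of syllables. Let φ be the induced linear functional on the free *-algebra in X_1,...,X_N with φ(X_σ^+ X_τ) = t_{σ^{-1}τ} for words σ, τ in the free monoid F_N^+. Then the polynomials φ_k = (1/√(1−|t_k|²))(X_k − t_k) for k = 1,...,N, and φ_{σk} = X_σ φ_k for σ ∈ F_N^+, satisfy the orthonormality conditions φ(φ_{σ}^+ φ_{σ}) = 1 and φ(X_τ^+ φ_σ) = 0 for all words τ strictly preceding σ in lexicographic order. -/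
open scoped ComplexConjugate

/-!
The value `φ(X_τ⁺ X_σ) = t_{τ⁻¹σ}` depends only on the reduced word of `τ⁻¹σ`. A common prefix
of `τ` and `σ` cancels, and once the first letters differ `τ⁻¹σ` is already reduced, so the
kernel factors as `conj t_τ · t_σ`. Hence appending `k` to `σ` multiplies the kernel by `t_k`
unless `τ` extends `σk`, which no lexicographic predecessor of `σk` does: this is
`φ(X_τ⁺ φ_{σk}) = 0`. The same computation gives `φ(X_{σk}⁺ X_σ) = conj t_k`, which reduces the
norm of `φ_{σk}` to `(1 - |t_k|²) / (1 - |t_k|²)`.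
-/

/-- The multiplicative extension of `t` to reduced words of the free group:
`t_{i} = t i`, `t_{i⁻¹} = conj (t i)`, extended over the letters of the reduced word. -/
noncomputable def twt {N : ℕ} (t : Fin N → ℂ) (w : FreeGroup (Fin N)) : ℂ :=
  ((FreeGroup.toWord w).map fun p => if p.2 then t p.1 else conj (t p.1)).prod

/-- The embedding of the free monoid on `N` generators (words = lists) into the free group. -/
def wordEmb {N : ℕ} (σ : List (Fin N)) : FreeGroup (Fin N) :=
  (σ.map FreeGroup.of).prod

/-- The moment kernel `K(σ,τ) = φ(X_σ⁺ X_τ) = t_{σ⁻¹τ}` of the functional `φ`. -/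
noncomputable def momK {N : ℕ} (t : Fin N → ℂ) (σ τ : List (Fin N)) : ℂ :=
  twt t ((wordEmb σ)⁻¹ * wordEmb τ)

/-- The (graded) lexicographic order on the free monoid `F_N⁺`. -/
def gLexLt {N : ℕ} (τ σ : List (Fin N)) : Prop :=
  τ.length < σ.length ∨ (τ.length = σ.length ∧ List.Lex (· < ·) τ σ)

namespace FreeGroup

variable {α : Type*}

theorem isReduced_map_prodMk_right (b : Bool) (L : List α) : IsReduced (L.map (·, b)) :=
  List.isChain_map_of_isChain _ (R := fun _ _ => True) (fun _ _ _ _ => rfl)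
    (List.Pairwise.isChain (List.pairwise_of_forall fun _ _ => trivial))

theorem toWord_inv_mk_mul_mk_of_head_ne [DecidableEq α] {τ σ : List α}
    (h : ∀ a ∈ τ.head?, ∀ b ∈ σ.head?, a ≠ b) :
    toWord ((mk (τ.map (·, true)))⁻¹ * mk (σ.map (·, true)))
      = τ.reverse.map (·, false) ++ σ.map (·, true) := by
  have hinv : invRev (τ.map (·, true)) = τ.reverse.map (·, false) := by
    simp [invRev, List.map_reverse]
  rw [inv_mk, mul_mk, toWord_mk, hinv]
  refine IsReduced.reduce_eq (List.isChain_append.2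
    ⟨isReduced_map_prodMk_right _ _, isReduced_map_prodMk_right _ _, ?_⟩)
  simp only [List.getLast?_map, List.getLast?_reverse, List.head?_map, Option.mem_def,
    Option.map_eq_some_iff]
  rintro _ ⟨a, ha, rfl⟩ _ ⟨b, hb, rfl⟩ hab
  exact absurd hab (h a ha b hb)

end FreeGroup

section Moments

variable {N : ℕ} (t : Fin N → ℂ)

@[simp]
lemma wordEmb_cons (a : Fin N) (σ : List (Fin N)) :
    wordEmb (a :: σ) = FreeGroup.of a * wordEmb σ := by
  simp [wordEmb]

lemma wordEmb_eq_mk (σ : List (Fin N)) : wordEmb σ = FreeGroup.mk (σ.map (·, true)) := by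
  induction σ with
  | nil => rfl
  | cons a σ ih => rw [wordEmb_cons, ih, FreeGroup.of, FreeGroup.mul_mk]; rfl

@[simp]
lemma momK_self (σ : List (Fin N)) : momK t σ σ = 1 := by
  simp [momK, twt]

lemma momK_cons_cons (a : Fin N) (τ σ : List (Fin N)) :
    momK t (a :: τ) (a :: σ) = momK t τ σ := by
  simp only [momK, wordEmb_cons, mul_inv_rev, mul_assoc, inv_mul_cancel_left]

lemma momK_append_append (p τ σ : List (Fin N)) :
    momK t (p ++ τ) (p ++ σ) = momK t τ σ := by
  induction p with
  | nil => rfl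
  | cons a p ih => rw [List.cons_append, List.cons_append, momK_cons_cons, ih]

lemma momK_of_head_ne {τ σ : List (Fin N)} (h : ∀ a ∈ τ.head?, ∀ b ∈ σ.head?, a ≠ b) :
    momK t τ σ = conj (τ.map t).prod * (σ.map t).prod := by
  rw [momK, twt, wordEmb_eq_mk, wordEmb_eq_mk, FreeGroup.toWord_inv_mk_mul_mk_of_head_ne h]
  simp [List.map_map, Function.comp_def, map_list_prod, List.prod_reverse]

@[simp]
lemma momK_nil_right (τ : List (Fin N)) : momK t τ [] = conj (τ.map t).prod := by
  simp [momK_of_head_ne t (τ := τ) (σ := []) (by simp)]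

lemma momK_append_singleton_of_ne {σ τ : List (Fin N)} {k : Fin N}
    (h : ∀ ρ, τ ≠ σ ++ k :: ρ) : momK t τ (σ ++ [k]) = t k * momK t τ σ := by
  induction σ generalizing τ with
  | nil =>
    have hhead : ∀ a ∈ τ.head?, ∀ b ∈ [k].head?, a ≠ b := by
      rintro a ha b hb rfl
      obtain rfl : k = a := Option.mem_some_iff.1 hb
      exact h τ.tail (List.eq_cons_of_mem_head? ha)
    rw [List.nil_append, momK_of_head_ne t hhead, momK_nil_right]
    simp [mul_comm]
  | cons b σ ih =>
    by_cases hb : b ∈ τ.head?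
    · obtain ⟨τ, rfl⟩ : ∃ τ', τ = b :: τ' := ⟨_, List.eq_cons_of_mem_head? hb⟩
      rw [List.cons_append, momK_cons_cons, momK_cons_cons]
      exact ih fun ρ hτ => h ρ (by rw [hτ, List.cons_append])
    · have hhead (ρ : List (Fin N)) : ∀ a ∈ τ.head?, ∀ c ∈ (b :: ρ).head?, a ≠ c := by
        rintro a ha c hc rfl
        exact hb (Option.mem_some_iff.1 hc ▸ ha)
      rw [List.cons_append, momK_of_head_ne t (hhead _), momK_of_head_ne t (hhead _)]
      simp only [List.map_cons, List.map_append, List.map_nil, List.prod_cons, List.prod_append,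
        List.prod_nil]
      ring

lemma momK_self_append_singleton (σ : List (Fin N)) (k : Fin N) :
    momK t σ (σ ++ [k]) = t k := by
  rw [momK_append_singleton_of_ne t (fun ρ h => by simpa using congrArg List.length h),
    momK_self, mul_one]

lemma momK_append_singleton_self (σ : List (Fin N)) (k : Fin N) :
    momK t (σ ++ [k]) σ = conj (t k) := by
  simpa using momK_append_append t σ [k] []

end Moments

lemma gLexLt.ne_append_cons {N : ℕ} {τ σ : List (Fin N)} {k : Fin N}
    (h : gLexLt τ (σ ++ [k])) (ρ : List (Fin N)) : τ ≠ σ ++ k :: ρ := by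
  rintro rfl
  rcases h with hlen | ⟨hlen, hlex⟩
  · simp at hlen
  · obtain rfl : ρ = [] := by simpa using hlen
    exact List.lex_irrefl (fun a => lt_irrefl a) _ hlex

/-- For `t_1, …, t_N` in the open unit disk and `φ` the induced functional with
`φ(X_σ⁺ X_τ) = t_{σ⁻¹τ}`, the polynomials `φ_k = (1/√(1-|t_k|²))(X_k - t_k)` and
`φ_{σk} = X_σ φ_k` are orthonormal: `φ(φ_{σk}⁺ φ_{σk}) = 1` (first conjunct, expanded
by linearity of `φ`, including the normalizing factor `1/(1-|t_k|²)`), and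
`φ(X_τ⁺ φ_{σk}) = 0` for every word `τ` strictly preceding `σk` in lexicographic order
(second conjunct, again expanded by linearity). -/
theorem stmt6 {N : ℕ} (t : Fin N → ℂ) (ht : ∀ k, ‖t k‖ < 1) :
    (∀ (σ : List (Fin N)) (k : Fin N),
      ((1 : ℂ) - (‖t k‖ : ℂ) ^ 2)⁻¹ *
        (momK t (σ ++ [k]) (σ ++ [k]) - t k * momK t (σ ++ [k]) σ
          - conj (t k) * momK t σ (σ ++ [k]) + (‖t k‖ : ℂ) ^ 2 * momK t σ σ) = 1) ∧
    (∀ (σ : List (Fin N)) (k : Fin N) (τ : List (Fin N)), gLexLt τ (σ ++ [k]) →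
      momK t τ (σ ++ [k]) - t k * momK t τ σ = 0) := by
  refine ⟨fun σ k => ?_, fun σ k τ h => ?_⟩
  · have hnorm : ‖t k‖ ^ 2 < 1 := pow_lt_one₀ (norm_nonneg _) (ht k) two_ne_zero
    have hne : (1 : ℂ) - (‖t k‖ : ℂ) ^ 2 ≠ 0 := sub_ne_zero.2 (by exact_mod_cast hnorm.ne')
    rw [momK_self, momK_self, momK_append_singleton_self, momK_self_append_singleton,
      Complex.mul_conj', Complex.conj_mul']
    exact inv_mul_eq_one₀ hne |>.2 (by ring)
  · rw [momK_append_singleton_of_ne t h.ne_append_cons, sub_self]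
end

section
/- Let K : F_N^+ × F_N^+ → ℂ be a kernel on the free monoid F_N^+ on N generators. Then K arises as the moment kernel K(σ,τ) = φ(π(X_σ)^+ π(X_τ)) of a linear functional φ on the *-algebra R generated by X_1,...,X_N, X_1^+,...,X_N^+ subject to the relations X_k^+ X_k = 1 (k = 1,...,N), if and only if K is invariant, i.e., K(τσ, τσ') = K(σ, σ') for all words τ, σ, σ' ∈ F_N^+. -/
/-- A unital complex `*`-algebra generated by `N` "isometric" variables
`x k` (satisfying `(x k)⁺ x k = 1`) in which the monomials `x_σ`, `σ ∈ F_N⁺`,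
are linearly independent.  This models the algebra `R(𝒜_O^N)`, the quotient of the free
`*`-algebra by the relations `X_k⁺ X_k = 1`, together with its quotient map `π`
(given by `σ ↦ (σ.map x).prod`). -/
structure StarRep (N : ℕ) where
  A : Type
  [ringA : Ring A]
  [algebraA : Algebra ℂ A]
  [starRingA : StarRing A]
  [starModuleA : StarModule ℂ A]
  x : Fin N → A
  isometry : ∀ k, star (x k) * x k = 1
  indep : LinearIndependent ℂ fun σ : List (Fin N) => (σ.map x).prod

attribute [instance] StarRep.ringA StarRep.algebraA StarRep.starRingA StarRep.starModuleA

/-!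
Invariance is forced because each `x_τ` is an isometry: `(x_τ x_σ)⁺ (x_τ x_σ') = x_σ⁺ x_σ'`.

Conversely, take the monoid algebra of `M = ⟨a_k, b_k | b_k a_k = 1⟩` with the involution
`a_k ↦ b_k`, and `x_k = a_k`. Letting `M` act on words in the letters `a_k, b_k` by prepending a
letter and cancelling a factor `b_k a_k` computes a normal form of each element. Writing
`σ = ρσ'`, `τ = ρτ'` with `ρ` the longest common prefix, the normal form of `x_σ⁺ x_τ` is
`b_{σ'} a_{τ'}` (the `b`-letters reversed), so the functional reading `K` off the `b`- and
`a`-letters of normal forms takes the value `K(σ', τ') = K(σ, τ)` on it. The normal form of `a_σ`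
is the word `σ` itself, so the monomials are distinct elements of `M`, hence linearly independent.
-/

open MulOpposite

lemma star_prod_map_mul_prod_map_eq_one {ι M : Type*} [Monoid M] [StarMul M] {x : ι → M}
    (hx : ∀ k, star (x k) * x k = 1) (ρ : List ι) :
    star (ρ.map x).prod * (ρ.map x).prod = 1 := by
  induction ρ with
  | nil => simp
  | cons k ρ ih =>
    rw [List.map_cons, List.prod_cons, star_mul, mul_assoc, ← mul_assoc (star (x k)), hx,
      one_mul, ih]

lemma star_prod_map_append_mul_prod_map_append {ι M : Type*} [Monoid M] [StarMul M]
    {x : ι → M} (hx : ∀ k, star (x k) * x k = 1) (ρ σ τ : List ι) :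
    star ((ρ ++ σ).map x).prod * ((ρ ++ τ).map x).prod =
      star (σ.map x).prod * (τ.map x).prod := by
  calc _ = star (σ.map x).prod * (star (ρ.map x).prod * (ρ.map x).prod) * (τ.map x).prod := by
        simp only [List.map_append, List.prod_append, star_mul, mul_assoc]
    _ = _ := by rw [star_prod_map_mul_prod_map_eq_one hx, mul_one]

namespace MonoidAlgebra

variable {R G : Type*} [CommSemiring R] [StarRing R] [Monoid G] [StarMul G]

noncomputable instance : Star R[G] where
  star x := ofCoeff ((x.coeff.comapDomain star star_injective.injOn).mapRange star (star_zero R))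

lemma coeff_star (x : R[G]) (m : G) : (star x).coeff m = star (x.coeff (star m)) := rfl

noncomputable instance : StarAddMonoid R[G] where
  star_involutive x := by ext; simp [coeff_star]
  star_add x y := by ext; simp [coeff_star]

lemma star_single (m : G) (r : R) : star (single m r) = single (star m) (star r) := by
  ext m'
  classical
  rw [coeff_star, coeff_single, coeff_single, Finsupp.single_apply, Finsupp.single_apply]
  split_ifs <;> subst_vars <;> simp_all

noncomputable instance : StarRing R[G] where
  star_add := star_add
  star_mul x y := by
    induction x using induction_linear with
    | zero => simp
    | add x x' hx hx' => simp [add_mul, mul_add, hx, hx']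
    | single m r =>
      induction y using induction_linear with
      | zero => simp
      | add y y' hy hy' => simp [add_mul, mul_add, hy, hy']
      | single n s => simp [single_mul_single, star_single, mul_comm]

instance : StarModule R R[G] where
  star_smul r x := by ext; simp [coeff_star]

lemma star_of (m : G) : star (of R G m) = of R G (star m) := by
  simp [of_apply, star_single]

end MonoidAlgebra

def bicyclicRels (ι : Type*) : FreeMonoid (ι ⊕ ι) → FreeMonoid (ι ⊕ ι) → Prop :=
  fun u v => ∃ k, u = .of (.inr k) * .of (.inl k) ∧ v = 1

/-- The free product of `ι` copies of the bicyclic monoid `⟨a, b | b a = 1⟩`; the letter `inl k`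
is `a_k` and `inr k` is `b_k`. -/
abbrev BicyclicMonoid (ι : Type*) := PresentedMonoid (bicyclicRels ι)

namespace BicyclicMonoid

variable {ι : Type*}

def a (k : ι) : BicyclicMonoid ι := PresentedMonoid.of _ (.inl k)

def b (k : ι) : BicyclicMonoid ι := PresentedMonoid.of _ (.inr k)

lemma b_mul_a (k : ι) : b k * a k = 1 :=
  PresentedMonoid.mk_eq_mk_of_rel ⟨k, rfl, rfl⟩

def lift {M : Type*} [Monoid M] (f : ι ⊕ ι → M) (hf : ∀ k, f (.inr k) * f (.inl k) = 1) :
    BicyclicMonoid ι →* M :=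
  PresentedMonoid.lift f <| by
    rintro _ _ ⟨k, rfl, rfl⟩
    simpa using hf k

def starHom : BicyclicMonoid ι →* (BicyclicMonoid ι)ᵐᵒᵖ :=
  lift (fun x => op (PresentedMonoid.of _ x.swap)) fun k => by
    rw [← op_mul]
    exact congrArg op (b_mul_a k)

instance : StarMul (BicyclicMonoid ι) where
  star m := unop (starHom m)
  star_involutive m := by
    have : (starHom.op.comp starHom : BicyclicMonoid ι →* _) = (MulEquiv.opOp _).toMonoidHom :=
      PresentedMonoid.ext _ fun x => by simp [starHom, lift]
    simpa using congr(unop (unop ($this m)))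
  star_mul m n := by simp [map_mul]

lemma star_a (k : ι) : star (a k) = b k := rfl

def word (σ : List ι) : BicyclicMonoid ι := (σ.map a).prod

lemma star_word_cons (k : ι) (σ : List ι) : star (word (k :: σ)) = star (word σ) * b k := by
  rw [word, List.map_cons, List.prod_cons, star_mul, ← word, star_a]

lemma star_word_append_mul_word_append (ρ σ τ : List ι) :
    star (word (ρ ++ σ)) * word (ρ ++ τ) = star (word σ) * word τ :=
  star_prod_map_append_mul_prod_map_append b_mul_a ρ σ τ

lemma prod_map_of_a {R : Type*} [CommSemiring R] (σ : List ι) :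
    (σ.map fun k => MonoidAlgebra.of R _ (a k)).prod = MonoidAlgebra.of R _ (word σ) := by
  rw [word, map_list_prod, List.map_map]
  rfl

variable [DecidableEq ι]

/-- Left multiplication by `b_k` on normal forms: cancel a leading `a_k`, otherwise prepend `b_k`. -/
def cancelCons (k : ι) : List (ι ⊕ ι) → List (ι ⊕ ι)
  | .inl l :: w => if l = k then w else .inr k :: .inl l :: w
  | w => .inr k :: w

lemma cancelCons_inl_cons (k : ι) (w : List (ι ⊕ ι)) : cancelCons k (.inl k :: w) = w := by
  simp [cancelCons]

lemma cancelCons_of_head?_ne {k : ι} {w : List (ι ⊕ ι)} (hw : w.head? ≠ some (.inl k)) :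
    cancelCons k w = .inr k :: w := by
  rcases w with _ | ⟨_ | l, w⟩
  · rfl
  · simp_all [cancelCons]
  · rfl

def act : BicyclicMonoid ι →* Function.End (List (ι ⊕ ι)) :=
  lift (Sum.elim (fun k => List.cons (.inl k)) cancelCons) fun k => funext (cancelCons_inl_cons k)

def normalForm (m : BicyclicMonoid ι) : List (ι ⊕ ι) := act m []

lemma act_mul (m n : BicyclicMonoid ι) (w : List (ι ⊕ ι)) :
    act (m * n) w = act m (act n w) := by
  rw [map_mul]
  rfl

lemma act_b (k : ι) (w : List (ι ⊕ ι)) : act (b k) w = cancelCons k w := rfl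

lemma act_word (σ : List ι) (w : List (ι ⊕ ι)) : act (word σ) w = σ.map .inl ++ w := by
  induction σ with
  | nil => rfl
  | cons k σ ih =>
    rw [word, List.map_cons, List.prod_cons, act_mul, ← word, ih]
    rfl

lemma act_star_word_cons {k : ι} (σ : List ι) {w : List (ι ⊕ ι)}
    (hw : w.head? ≠ some (.inl k)) :
    act (star (word (k :: σ))) w = (k :: σ).reverse.map .inr ++ w := by
  induction σ generalizing k w with
  | nil => exact cancelCons_of_head?_ne hw
  | cons j σ ih =>
    rw [star_word_cons, act_mul, act_b, cancelCons_of_head?_ne hw, ih (by simp)]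
    simp

lemma word_injective : Function.Injective (word (ι := ι)) := fun σ τ h =>
  List.map_injective_iff.2 Sum.inl_injective <| by
    simpa [normalForm, act_word] using congr(normalForm $h)

def momentFun {α : Type*} (K : List ι → List ι → α) (m : BicyclicMonoid ι) : α :=
  K ((normalForm m).filterMap Sum.getRight?).reverse ((normalForm m).filterMap Sum.getLeft?)

lemma momentFun_star_word_mul_word {α : Type*} {K : List ι → List ι → α}
    (hK : ∀ ρ σ τ, K (ρ ++ σ) (ρ ++ τ) = K σ τ) (σ τ : List ι) :
    momentFun K (star (word σ) * word τ) = K σ τ := by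
  induction σ generalizing τ with
  | nil =>
    rw [show star (word ([] : List ι)) = 1 from star_one _, one_mul]
    simp [momentFun, normalForm, act_word, Function.comp_def]
  | cons k σ ih =>
    by_cases hτ : τ.head? = some k
    · obtain ⟨τ, rfl⟩ := List.head?_eq_some_iff.1 hτ
      calc momentFun K (star (word (k :: σ)) * word (k :: τ))
          = momentFun K (star (word σ) * word τ) :=
            congrArg _ (star_word_append_mul_word_append [k] σ τ)
        _ = K σ τ := ih τ
        _ = K (k :: σ) (k :: τ) := (hK [k] σ τ).symm
    · rw [momentFun, normalForm, act_mul, act_word, List.append_nil,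
        act_star_word_cons σ (by simpa using hτ)]
      simp [Function.comp_def, List.filterMap_cons]

noncomputable def momentFunctional {R : Type*} [CommSemiring R] (K : List ι → List ι → R) :
    MonoidAlgebra R (BicyclicMonoid ι) →ₗ[R] R :=
  (MonoidAlgebra.basis _ R).constr R (momentFun K)

lemma momentFunctional_star_of_word_mul_of_word {R : Type*} [CommSemiring R] [StarRing R]
    {K : List ι → List ι → R} (hK : ∀ ρ σ τ, K (ρ ++ σ) (ρ ++ τ) = K σ τ) (σ τ : List ι) :
    momentFunctional K (star (MonoidAlgebra.of R _ (word σ)) * MonoidAlgebra.of R _ (word τ)) =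
      K σ τ := by
  rw [MonoidAlgebra.star_of, ← map_mul, momentFunctional, MonoidAlgebra.of_apply,
    ← MonoidAlgebra.basis_apply, Module.Basis.constr_basis, momentFun_star_word_mul_word hK]

end BicyclicMonoid

namespace StarRep

open BicyclicMonoid

noncomputable def bicyclic (N : ℕ) : StarRep N where
  A := MonoidAlgebra ℂ (BicyclicMonoid (Fin N))
  x k := MonoidAlgebra.of ℂ _ (a k)
  isometry k := by rw [MonoidAlgebra.star_of, ← map_mul, star_a, b_mul_a, map_one]
  indep := by
    rw [funext prod_map_of_a]
    exact (MonoidAlgebra.basis _ ℂ).linearIndependent.comp _ word_injective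

lemma bicyclic_monomial {N : ℕ} (σ : List (Fin N)) :
    (σ.map (bicyclic N).x).prod = MonoidAlgebra.of ℂ _ (word σ) :=
  prod_map_of_a σ

end StarRep

/-- A kernel `K` on the free monoid `F_N⁺` is the moment kernel
`K(σ,τ) = φ(π(X_σ)⁺ π(X_τ))` of a linear functional `φ` on the `*`-algebra generated by
`X_1, …, X_N` subject to `X_k⁺ X_k = 1` if and only if `K` is invariant:
`K(τσ, τσ') = K(σ, σ')` for all words `τ, σ, σ'`. -/
theorem stmt7 (N : ℕ) (K : List (Fin N) → List (Fin N) → ℂ) :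
    (∃ (S : StarRep N) (φ : S.A →ₗ[ℂ] ℂ),
        ∀ σ τ : List (Fin N),
          K σ τ = φ (star ((σ.map S.x).prod) * (τ.map S.x).prod)) ↔
      ∀ τ σ σ' : List (Fin N), K (τ ++ σ) (τ ++ σ') = K σ σ' := by
  constructor
  · rintro ⟨S, φ, hφ⟩ τ σ σ'
    rw [hφ, hφ, star_prod_map_append_mul_prod_map_append S.isometry]
  · intro hK
    refine ⟨StarRep.bicyclic N, BicyclicMonoid.momentFunctional K, fun σ τ => ?_⟩
    rw [StarRep.bicyclic_monomial, StarRep.bicyclic_monomial]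
    exact (BicyclicMonoid.momentFunctional_star_of_word_mul_of_word hK σ τ).symm
end

section
/- Let A = [A_{i,j}]_{i,j=1}^p be a selfadjoint p×p block matrix over ℂ (or with operator entries) with zero diagonal blocks A_{k,k} = 0. Then A = B 𝔍_{2p−2} B*, where B is the p × (2p−2) block matrix whose columns are: for j = 1,...,p−1, the column with entries A_{i,j} for i > j and 0 otherwise; followed (in reverse order pairing) by columns e_{p−1}, ..., e_1 of identity blocks, arranged so that B has first row (0,...,0, I) and row i has entries A_{i,1},...,A_{i,i−1}, 0,...,0 together with an identity I in the (2p−1−i)-th column; and 𝔍_k is the k×k anti-diagonal block matrix with identity blocks on the antidiagonal and zeros elsewhere. -/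
open Matrix

/-- Any selfadjoint `p × p` block matrix `A` (entries in a unital `*`-ring, e.g. blocks of
operators or complex numbers) with zero diagonal blocks factors as `A = B 𝔍_{2p-2} B*`,
where `B` is the explicit `p × (2p-2)` block matrix with `B_{i,j} = A_{i,j}` for `j < i`,
an identity block in row `i` (for `i ≤ p-1`, 1-indexed) at column `2p-1-i`, and zeros
elsewhere, and `𝔍_k` is the `k × k` block matrix with identity blocks on the antidiagonal.
(Indices below are 0-indexed: the identity block of row `i ≤ p-2` sits in column `2p-3-i`,
and the antidiagonal is `i + j = 2p-3`.) -/
theorem stmt9 {R : Type*} [Ring R] [StarRing R] (p : ℕ)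
    (A : Matrix (Fin p) (Fin p) R)
    (hA : A.IsHermitian) (hdiag : ∀ k, A k k = 0)
    (B : Matrix (Fin p) (Fin (2 * p - 2)) R)
    (hB : B = Matrix.of fun (i : Fin p) (j : Fin (2 * p - 2)) =>
      if h : (j : ℕ) < (i : ℕ) then A i ⟨(j : ℕ), h.trans i.isLt⟩
      else if (i : ℕ) ≤ p - 2 ∧ (j : ℕ) = 2 * p - 3 - (i : ℕ) then 1 else 0)
    (Jm : Matrix (Fin (2 * p - 2)) (Fin (2 * p - 2)) R)
    (hJm : Jm = Matrix.of fun (i j : Fin (2 * p - 2)) => if (i : ℕ) + (j : ℕ) = 2 * p - 3 then 1 else 0) :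
    A = B * Jm * Bᴴ := by
  have hsym : ∀ a b : Fin p, star (A a b) = A b a := by
    intro a b
    have := congrFun (congrFun hA b) a
    simpa [Matrix.conjTranspose_apply] using this
  funext i k
  have hp : 0 < p := i.pos
  have hip : (i : ℕ) < p := i.isLt
  have hkp : (k : ℕ) < p := k.isLt
  have hBJ : ∀ l : Fin (2 * p - 2),
      (B * Jm) i l = B i ⟨2 * p - 3 - (l : ℕ), by have := l.isLt; omega⟩ := by
    intro l
    have hl := l.isLt
    rw [Matrix.mul_apply]
    rw [Finset.sum_eq_single (⟨2 * p - 3 - (l : ℕ), by omega⟩ : Fin (2 * p - 2))]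
    · rw [hJm]
      simp only [Matrix.of_apply, Fin.val_mk]
      rw [if_pos (by omega), mul_one]
    · intro b _ hb
      rw [hJm]
      simp only [Matrix.of_apply, Fin.val_mk]
      rw [if_neg (fun h => hb (Fin.ext (show (b : ℕ) = 2 * p - 3 - (l : ℕ) by omega))),
        mul_zero]
    · intro h
      exact absurd (Finset.mem_univ _) h
  rw [Matrix.mul_apply]
  have key : ∀ l : Fin (2 * p - 2), (B * Jm) i l * Bᴴ l k
      = B i ⟨2 * p - 3 - (l : ℕ), by have := l.isLt; omega⟩ * star (B k l) := by
    intro l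
    rw [hBJ l, Matrix.conjTranspose_apply]
  rw [Finset.sum_congr rfl (fun l _ => key l)]
  rcases lt_trichotomy (i : ℕ) (k : ℕ) with hik | hik | hik
  · -- i < k : single l = i
    rw [Finset.sum_eq_single (⟨(i : ℕ), by omega⟩ : Fin (2 * p - 2))]
    · rw [hB]
      simp only [Matrix.of_apply, Fin.val_mk, Fin.eta]
      rw [dif_neg (show ¬(2 * p - 3 - (i : ℕ) < (i : ℕ)) by omega),
        if_pos (show (i : ℕ) ≤ p - 2 ∧ True from ⟨by omega, trivial⟩),
        dif_pos hik, one_mul, hsym]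
    · intro l _ hl
      have hll := l.isLt
      have hlne : (l : ℕ) ≠ (i : ℕ) := fun h => hl (Fin.ext h)
      rw [hB]
      simp only [Matrix.of_apply, Fin.val_mk, Fin.eta]
      split_ifs <;> first | (exfalso; omega) | simp
    · intro h
      exact absurd (Finset.mem_univ _) h
  · -- i = k : all zero
    have : (i : Fin p) = k := Fin.ext hik
    subst this
    rw [hdiag i, Finset.sum_eq_zero]
    intro l _
    have hll := l.isLt
    rw [hB]
    simp only [Matrix.of_apply, Fin.val_mk, Fin.eta]
    split_ifs <;> first | (exfalso; omega) | simp
  · -- k < i : single l = 2p-3-k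
    rw [Finset.sum_eq_single (⟨2 * p - 3 - (k : ℕ), by omega⟩ : Fin (2 * p - 2))]
    · rw [hB]
      simp only [Matrix.of_apply, Fin.val_mk, Fin.eta]
      rw [dif_pos (show 2 * p - 3 - (2 * p - 3 - (k : ℕ)) < (i : ℕ) by omega)]
      have hc2 : ¬(2 * p - 3 - (k : ℕ) < (k : ℕ)) := by omega
      have hc3 : (k : ℕ) ≤ p - 2 := by omega
      simp only [dif_neg hc2, hc3, true_and, and_true, if_true, star_one, mul_one]
      exact congrArg (A i) (Fin.ext (show (k : ℕ) = 2 * p - 3 - (2 * p - 3 - (k : ℕ)) by omega))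
    · intro l _ hl
      have hll := l.isLt
      have hlne : (l : ℕ) ≠ 2 * p - 3 - (k : ℕ) := fun h => hl (Fin.ext h)
      rw [hB]
      simp only [Matrix.of_apply, Fin.val_mk, Fin.eta]
      split_ifs <;> first | (exfalso; omega) | simp
    · intro h
      exact absurd (Finset.mem_univ _) h
end

section
/- Let K : F_N^+ × F_N^+ → ℂ be an invariant positive definite kernel with K(σ,σ) = 1, let n ≥ 0, and index the words of length at most n. Let R_n = [K(σ,τ)]_{|σ|,|τ|≤n}, and for k = 1,...,N let F_{k,n} be the operator on the space of sequences (h_σ)_{|σ|≤n} sending (h_σ) to (g_τ) with g_τ = h_σ if τ = kσ and g_τ = 0 otherwise. Define Q_n(σ,τ) = 0 if σ and τ have a common nonempty prefix, and Q_n(σ,τ) = K(σ,τ) otherwise. Then R_n − Σ_{k=1}^N F_{k,n} R_n F_{k,n}* = Q_n. -/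
open Matrix

open scoped ComplexConjugate ComplexOrder

/-- Index type for the words of length at most `n` in the free monoid on `N` generators. -/
abbrev WIdx (N n : ℕ) := Σ k : Fin (n + 1), Fin (k : ℕ) → Fin N

/-- The word (list of letters) corresponding to an index. -/
def toWordL {N n : ℕ} (w : WIdx N n) : List (Fin N) := List.ofFn w.2

/-- A scalar kernel on the free monoid is positive definite. -/
def IsPDKernel {N : ℕ} (K : List (Fin N) → List (Fin N) → ℂ) : Prop :=
  ∀ (m : ℕ) (x : Fin m → List (Fin N)) (c : Fin m → ℂ),
    0 ≤ ∑ i, ∑ j, conj (c i) * K (x i) (x j) * c j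

/-- `R_n = [K(σ,τ)]_{|σ|,|τ| ≤ n}`. -/
noncomputable def Rmat {N : ℕ} (n : ℕ) (K : List (Fin N) → List (Fin N) → ℂ) :
    Matrix (WIdx N n) (WIdx N n) ℂ :=
  Matrix.of fun σ τ => K (toWordL σ) (toWordL τ)

/-- The matrix of the shift `F_{k,n} : e_σ ↦ e_{kσ}` (and `0` if `|kσ| > n`). -/
def Fmat {N : ℕ} (n : ℕ) (k : Fin N) : Matrix (WIdx N n) (WIdx N n) ℂ :=
  Matrix.of fun τ σ => if toWordL τ = k :: toWordL σ then 1 else 0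

/-- `Q_n(σ,τ) = 0` if `σ` and `τ` have a common nonempty prefix (equivalently, both are
nonempty with the same first letter), and `Q_n(σ,τ) = K(σ,τ)` otherwise. -/
noncomputable def Qmat {N : ℕ} (n : ℕ) (K : List (Fin N) → List (Fin N) → ℂ) :
    Matrix (WIdx N n) (WIdx N n) ℂ :=
  Matrix.of fun σ τ =>
    if toWordL σ ≠ [] ∧ (toWordL σ).head? = (toWordL τ).head? then 0
    else K (toWordL σ) (toWordL τ)

section Aux
variable {N n : ℕ}

lemma star_ind (p : Prop) [Decidable p] :
    star (if p then (1:ℂ) else 0) = if p then (1:ℂ) else 0 := by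
  split <;> simp

lemma toWordL_injective : Function.Injective (toWordL (N:=N) (n:=n)) := by
  rintro ⟨⟨k,hk⟩,w⟩ ⟨⟨k',hk'⟩,w'⟩ h
  have hl : k = k' := by
    have := congrArg List.length h
    simpa [toWordL] using this
  subst hl
  simpa [toWordL, List.ofFn_inj] using h

def fromW (l : List (Fin N)) (h : l.length ≤ n) : WIdx N n :=
  ⟨⟨l.length, Nat.lt_succ_of_le h⟩, fun i => l.get ⟨i, i.isLt⟩⟩

lemma toWordL_fromW (l : List (Fin N)) (h : l.length ≤ n) : toWordL (fromW l h) = l := by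
  simp [toWordL, fromW]

lemma len_le (σ : WIdx N n) : (toWordL σ).length ≤ n := by
  simp [toWordL]; omega

lemma eq_iff (l : List (Fin N)) (h : l.length ≤ n) (α : WIdx N n) :
    toWordL α = l ↔ α = fromW l h :=
  ⟨fun h' => toWordL_injective (h'.trans (toWordL_fromW l h).symm),
   fun h' => h' ▸ toWordL_fromW l h⟩

end Aux

/-- An invariant positive definite kernel with unit diagonal on the free monoid satisfies,
for each `n ≥ 0`, the displacement equation
`R_n - Σ_{k=1}^N F_{k,n} R_n F_{k,n}* = Q_n`. -/
theorem stmt12 (N n : ℕ) (K : List (Fin N) → List (Fin N) → ℂ)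
    (hpd : IsPDKernel K) (hdiag : ∀ σ, K σ σ = 1)
    (hinv : ∀ τ σ σ' : List (Fin N), K (τ ++ σ) (τ ++ σ') = K σ σ') :
    Rmat n K - ∑ k : Fin N, Fmat n k * Rmat n K * (Fmat n k)ᴴ = Qmat n K := by
  ext σ τ
  simp only [Matrix.sub_apply, Matrix.sum_apply, Matrix.mul_apply,
    Matrix.conjTranspose_apply, Fmat, Rmat, Qmat, Matrix.of_apply, star_ind]
  rcases hσ : toWordL σ with _ | ⟨a, s⟩
  · simp [hσ]
  · rcases hτ : toWordL τ with _ | ⟨b, t⟩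
    · simp [hσ, hτ]
    · have hs : s.length ≤ n := by
        have := len_le σ; rw [hσ] at this; simp at this; omega
      have ht : t.length ≤ n := by
        have := len_le τ; rw [hτ] at this; simp at this; omega
      by_cases hab : a = b
      · subst hab
        have hsum : ∀ k : Fin N,
            (∑ j : WIdx N n, (∑ i : WIdx N n,
              (if a :: s = k :: toWordL i then (1:ℂ) else 0) * K (toWordL i) (toWordL j)) *
              (if a :: t = k :: toWordL j then (1:ℂ) else 0))
            = if k = a then K s t else 0 := by
          intro k
          by_cases hk : k = a
          · subst hk
            have cs : ∀ i : WIdx N n, (k :: s = k :: toWordL i) ↔ (i = fromW s hs) := by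
              intro i
              rw [List.cons_eq_cons]
              simp only [true_and]
              exact eq_comm.trans (eq_iff s hs i)
            have ct : ∀ j : WIdx N n, (k :: t = k :: toWordL j) ↔ (j = fromW t ht) := by
              intro j
              rw [List.cons_eq_cons]
              simp only [true_and]
              exact eq_comm.trans (eq_iff t ht j)
            simp only [cs, ct, ite_mul, one_mul, zero_mul,
              Finset.sum_ite_eq', Finset.mem_univ, if_true]
            simp only [mul_ite, mul_one, mul_zero,
              Finset.sum_ite_eq', Finset.mem_univ, if_true, toWordL_fromW, if_pos rfl]
          · have hi : ∀ i : WIdx N n,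
                (if a :: s = k :: toWordL i then (1:ℂ) else 0) = 0 := fun i =>
              if_neg fun h => hk ((List.cons_eq_cons.mp h).1.symm)
            simp only [hi, zero_mul, Finset.sum_const_zero]
            simp [hk]
        rw [Finset.sum_congr rfl fun k _ => hsum k]
        simp only [Finset.sum_ite_eq', Finset.mem_univ, if_true]
        have hKs : K (a :: s) (a :: t) = K s t := by
          have := hinv [a] s t; simpa using this
        simp [hKs]
      · have hz : ∀ k : Fin N,
            (∑ j : WIdx N n, (∑ i : WIdx N n,
              (if a :: s = k :: toWordL i then (1:ℂ) else 0) * K (toWordL i) (toWordL j)) *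
              (if b :: t = k :: toWordL j then (1:ℂ) else 0)) = 0 := by
          intro k
          by_cases hkb : k = b
          · have hka : k ≠ a := fun h => hab (by rw [← h, hkb])
            have hi : ∀ i : WIdx N n,
                (if a :: s = k :: toWordL i then (1:ℂ) else 0) = 0 := fun i =>
              if_neg fun h => hka ((List.cons_eq_cons.mp h).1.symm)
            simp only [hi, zero_mul, Finset.sum_const_zero, zero_mul]
          · have hj : ∀ j : WIdx N n,
                (if b :: t = k :: toWordL j then (1:ℂ) else 0) = 0 := fun j =>
              if_neg fun h => hkb ((List.cons_eq_cons.mp h).1.symm)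
            simp only [hj, mul_zero, Finset.sum_const_zero]
        rw [Finset.sum_congr rfl fun k _ => hz k]
        simp [hab]
end

section
/- Let (s_{k,j})_{k,j≥0} be the moments of a strictly positive definite scalar kernel on ℕ, R_n(t) = [s_{k,j}]_{t≤k,j≤t+n}, F_n(t) the (n+1)×(n+1) lower shift matrix (ones on the subdiagonal), J = diag(1,−1), and G_n(t) = s_{t,t}^{−1/2} · [[s_{t,t}, 0], [conj(s_{t,t+1}), conj(s_{t,t+1})], ..., [conj(s_{t,t+n}), conj(s_{t,t+n})]]. Then the displacement equation R_n(t) − F_n(t) R_n(t+1) F_n(t)* = G_n(t) J G_n(t)* holds for all t ≥ 0. -/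
open Matrix

open scoped ComplexConjugate ComplexOrder

/-!
Conjugating by the lower shift moves `R(t+1)` one step down the diagonal, where it agrees with
`R(t)`; so the displacement `R(t) - F R(t+1) Fᴴ` is the border of `R(t)` (its first row and
column). The two columns of the unnormalised generator `g` agree below the first row, so
`g J gᴴ` is `s_{t,t}` times that border, and positivity of `s_{t,t}` makes the normalisation
`s_{t,t}^{-1/2}` real.
-/

namespace Matrix

variable {R : Type*}

def lowerShift (m : ℕ) (R : Type*) [Zero R] [One R] : Matrix (Fin m) (Fin m) R :=
  of fun i j => if (i : ℕ) = (j : ℕ) + 1 then 1 else 0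

section Shift

variable [Semiring R] {n : ℕ} {o : Type*}

private lemma val_eq_val_iff_eq_castSucc (i : Fin n) (k : Fin (n + 1)) :
    (i : ℕ) = k ↔ k = i.castSucc := by
  simp [Fin.ext_iff, eq_comm]

@[simp]
lemma lowerShift_mul_apply_zero (A : Matrix (Fin (n + 1)) o R) (k : o) :
    (lowerShift (n + 1) R * A) 0 k = 0 := by
  simp [lowerShift, mul_apply]

@[simp]
lemma lowerShift_mul_apply_succ (A : Matrix (Fin (n + 1)) o R) (i : Fin n) (k : o) :
    (lowerShift (n + 1) R * A) i.succ k = A i.castSucc k := by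
  simp [lowerShift, mul_apply, val_eq_val_iff_eq_castSucc]

variable [StarRing R]

@[simp]
lemma mul_lowerShift_conjTranspose_apply_zero (A : Matrix o (Fin (n + 1)) R) (k : o) :
    (A * (lowerShift (n + 1) R)ᴴ) k 0 = 0 := by
  simp [lowerShift, mul_apply]

@[simp]
lemma mul_lowerShift_conjTranspose_apply_succ (A : Matrix o (Fin (n + 1)) R) (k : o)
    (j : Fin n) : (A * (lowerShift (n + 1) R)ᴴ) k j.succ = A k j.castSucc := by
  simp [lowerShift, mul_apply, apply_ite, val_eq_val_iff_eq_castSucc]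

end Shift

lemma smul_mul_mul_smul_conjTranspose [CommSemiring R] [StarRing R] {m k : Type*}
    [Fintype k] (c : R) (G : Matrix m k R) (J : Matrix k k R) :
    (c • G) * J * (c • G)ᴴ = (c * star c) • (G * J * Gᴴ) := by
  rw [conjTranspose_smul, Matrix.smul_mul, Matrix.smul_mul, Matrix.mul_smul, smul_smul]

section Kernel

variable (s : ℕ → ℕ → R) (n t : ℕ)

def kernelBlock : Matrix (Fin (n + 1)) (Fin (n + 1)) R :=
  of fun i j => s (t + i) (t + j)

def kernelGenerator [Zero R] [Star R] : Matrix (Fin (n + 1)) (Fin 2) R :=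
  of fun i j => if (i : ℕ) = 0 then (if (j : ℕ) = 0 then s t t else 0) else star (s t (t + i))

lemma kernelBlock_sub_lowerShift_mul_kernelBlock_succ [Ring R] [StarRing R] :
    kernelBlock s n t - lowerShift (n + 1) R * kernelBlock s n (t + 1) * (lowerShift (n + 1) R)ᴴ
      = of fun i j : Fin (n + 1) => if (i : ℕ) = 0 ∨ (j : ℕ) = 0 then s (t + i) (t + j) else 0 := by
  ext i j
  cases i using Fin.cases <;> cases j using Fin.cases <;>
    simp [kernelBlock, add_assoc, add_comm 1]

lemma kernelGenerator_mul_signature_mul_conjTranspose [CommRing R] [StarRing R]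
    (hs : ∀ k j, s j k = star (s k j)) :
    kernelGenerator s n t * !![(1 : R), 0; 0, -1] * (kernelGenerator s n t)ᴴ
      = s t t • (kernelBlock s n t
          - lowerShift (n + 1) R * kernelBlock s n (t + 1) * (lowerShift (n + 1) R)ᴴ) := by
  rw [kernelBlock_sub_lowerShift_mul_kernelBlock_succ]
  ext i j
  cases i using Fin.cases <;> cases j using Fin.cases <;>
    simp [kernelGenerator, mul_apply, Fin.sum_univ_two, ← hs, mul_comm]

end Kernel

end Matrix

lemma Complex.inv_ofReal_sqrt_re_mul_star_mul_self {z : ℂ} (hz : 0 < z) :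
    ((√z.re : ℂ))⁻¹ * star ((√z.re : ℂ))⁻¹ * z = 1 := by
  rw [star_inv₀, Complex.star_def, Complex.conj_ofReal, ← mul_inv, ← Complex.ofReal_mul,
    Real.mul_self_sqrt (Complex.pos_iff.mp hz).1.le, ← Complex.eq_re_of_ofReal_le hz.le,
    inv_mul_cancel₀ hz.ne']

/-- Let `(s k j)` be the moments of a strictly positive definite Hermitian scalar kernel
on `ℕ`, `R_n(t) = [s_{k,j}]_{t ≤ k,j ≤ t+n}`, `F_n(t)` the lower shift matrix,
`J = diag(1,-1)` and `G_n(t) = s_{t,t}^{-1/2}·[[s_{t,t},0],[conj s_{t,t+1}, conj s_{t,t+1}],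
…, [conj s_{t,t+n}, conj s_{t,t+n}]]`.  Then
`R_n(t) - F_n(t) R_n(t+1) F_n(t)* = G_n(t) J G_n(t)*` for all `t`. -/
theorem stmt14 (s : ℕ → ℕ → ℂ) (n : ℕ)
    (hherm : ∀ k j, s j k = conj (s k j))
    (hpd : ∀ (t m : ℕ),
      (Matrix.of fun i j : Fin (m + 1) => s (t + i) (t + j)).PosDef)
    (R : ℕ → Matrix (Fin (n + 1)) (Fin (n + 1)) ℂ)
    (hR : R = fun t => Matrix.of fun (i j : Fin (n + 1)) => s (t + i) (t + j))
    (F : Matrix (Fin (n + 1)) (Fin (n + 1)) ℂ)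
    (hF : F = Matrix.of fun (i j : Fin (n + 1)) => if (i : ℕ) = (j : ℕ) + 1 then 1 else 0)
    (J : Matrix (Fin 2) (Fin 2) ℂ) (hJ : J = !![1, 0; 0, -1])
    (G : ℕ → Matrix (Fin (n + 1)) (Fin 2) ℂ)
    (hG : G = fun t => Matrix.of fun (i : Fin (n + 1)) (j : Fin 2) =>
      ((Real.sqrt (s t t).re : ℝ) : ℂ)⁻¹ *
        (if (i : ℕ) = 0 then (if (j : ℕ) = 0 then s t t else 0)
         else conj (s t (t + i)))) :
    ∀ t : ℕ, R t - F * R (t + 1) * Fᴴ = G t * J * (G t)ᴴ := by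
  intro t
  set c : ℂ := ((√(s t t).re : ℝ) : ℂ)⁻¹
  have hpos : 0 < s t t := by simpa using (hpd t 0).diag_pos (i := 0)
  have hGt : G t = c • kernelGenerator s n t := by subst hG; rfl
  obtain rfl : R = kernelBlock s n := hR
  obtain rfl : F = lowerShift (n + 1) ℂ := hF
  rw [hGt, hJ, smul_mul_mul_smul_conjTranspose,
    kernelGenerator_mul_signature_mul_conjTranspose s n t hherm, smul_smul,
    Complex.inv_ofReal_sqrt_re_mul_star_mul_self hpos, one_smul]
end

section
/- Let φ1, φ2 be q-positive unital linear functionals on unital *-algebras R1, R2 (i.e., φ_i(x* x) ≥ 0 for all x). Then their free product functional φ = φ1 ⋆ φ2 on the algebraic free product R1 ⋆ R2 (amalgamated over ℂ), defined by φ(1) = 1 and φ(p_{i_1} ··· p_{i_n}) = φ_{i_1}(p_{i_1}) ··· φ_{i_n}(p_{i_n}) for alternating i_1 ≠ i_2, ..., i_{n−1} ≠ i_n and p_{i_k} in the augmentation-kernel of R_{i_k} (i.e., φ_{i_k}(p_{i_k}) can be arranged to vanish after centering), satisfies φ(x* x) ≥ 0 for all x ∈ R1 ⋆ R2. -/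
/-!
Every element of the free product is a linear combination of alternating words
`ι_{i₁}(a₁) ⋯ ι_{iₙ}(aₙ)` with centered letters, so it suffices that the Gram matrix
`(φ(w_j^* w_k))` of finitely many such words is positive semidefinite. If `w = a v` and
`w' = a' v'` begin with letters from the same `R_i`, then `a^* a' - φ_i(a^* a')` is again centered,
and freeness gives `φ(w^* w') = φ_i(a^* a') φ(v^* v')`; words beginning on different sides, or
exactly one of which is empty, are orthogonal. Hence the Gram matrix is a rank-one positive matrix
plus the Schur products of Gram matrices of `φ₁` and `φ₂` with the Gram matrix of the shortened
words, and it is positive semidefinite by induction on the length and the Schur product theorem.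
-/

open scoped ComplexOrder
open Matrix

namespace LinearMap

variable {A ι : Type*} [Ring A] [Algebra ℂ A] [StarRing A] (φ : A →ₗ[ℂ] ℂ)

def gram (a : ι → A) : Matrix ι ι ℂ := Matrix.of fun j k => φ (star (a j) * a k)

@[simp] lemma gram_apply (a : ι → A) (j k : ι) : φ.gram a j k = φ (star (a j) * a k) := rfl

variable [StarModule ℂ A]

lemma star_dotProduct_gram_mulVec [Fintype ι] (a : ι → A) (c : ι → ℂ) :
    star c ⬝ᵥ φ.gram a *ᵥ c = φ (star (∑ j, c j • a j) * ∑ k, c k • a k) := by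
  simp only [dotProduct, mulVec, gram_apply, star_sum, star_smul, Finset.sum_mul, Finset.mul_sum,
    smul_mul_assoc, mul_smul_comm, map_sum, map_smul, smul_eq_mul, Pi.star_apply]
  exact Finset.sum_comm.trans
    (Finset.sum_congr rfl fun _ _ => Finset.sum_congr rfl fun _ _ => by ring)

variable {φ}

lemma star_apply_star_mul (hφ : ∀ x, 0 ≤ φ (star x * x)) (a b : A) :
    star (φ (star a * b)) = φ (star b * a) := by
  have him : ∀ x, (φ (star x * x)).im = 0 := fun x => (Complex.nonneg_iff.mp (hφ x)).2.symm
  have h₁ : (φ (star b * a)).im + (φ (star a * b)).im = 0 := by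
    simpa [add_mul, mul_add, him] using him (a + b)
  have h₂ : -(φ (star b * a)).re + (φ (star a * b)).re = 0 := by
    simpa [add_mul, mul_add, him, Complex.conj_I] using him (a + Complex.I • b)
  apply Complex.ext <;> simp <;> linarith

lemma apply_star (hφ : ∀ x, 0 ≤ φ (star x * x)) (x : A) : φ (star x) = star (φ x) := by
  simpa using (star_apply_star_mul hφ 1 x).symm

lemma posSemidef_gram [Fintype ι] (hφ : ∀ x, 0 ≤ φ (star x * x)) (a : ι → A) :
    (φ.gram a).PosSemidef := by
  refine posSemidef_iff_dotProduct_mulVec.mpr ⟨?_, fun c => ?_⟩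
  · ext j k
    exact star_apply_star_mul hφ (a k) (a j)
  · rw [star_dotProduct_gram_mulVec]
    exact hφ _

end LinearMap

lemma exists_apply_eq_zero_and_map_eq_smul_one_add {A B F : Type*} [Ring A] [Algebra ℂ A]
    [Ring B] [Algebra ℂ B] [FunLike F A B] [AlgHomClass F ℂ A B] {ψ : A →ₗ[ℂ] ℂ}
    (hψ : ψ 1 = 1) (κ : F) (y : A) :
    ∃ z, ψ z = 0 ∧ κ y = ψ y • 1 + κ z :=
  ⟨y - ψ y • 1, by simp [hψ], by simp⟩

namespace FreeProductWord

variable {R₁ R₂ R : Type*} [Ring R₁] [Algebra ℂ R₁] [Ring R₂] [Algebra ℂ R₂]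
  (φ₁ : R₁ →ₗ[ℂ] ℂ) (φ₂ : R₂ →ₗ[ℂ] ℂ)

def IsCentered : R₁ ⊕ R₂ → Prop := Sum.elim (φ₁ · = 0) (φ₂ · = 0)

def IsAlternating (l : List (R₁ ⊕ R₂)) : Prop :=
  l.IsChain (fun x y => x.isLeft ≠ y.isLeft) ∧ ∀ x ∈ l, IsCentered φ₁ φ₂ x

variable {φ₁ φ₂}

lemma isAlternating_nil : IsAlternating φ₁ φ₂ [] := ⟨.nil, by simp⟩

lemma isAlternating_cons {x : R₁ ⊕ R₂} {l : List (R₁ ⊕ R₂)} :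
    IsAlternating φ₁ φ₂ (x :: l) ↔
      IsCentered φ₁ φ₂ x ∧ (∀ y ∈ l.head?, x.isLeft ≠ y.isLeft) ∧ IsAlternating φ₁ φ₂ l := by
  simp only [IsAlternating, List.isChain_cons, List.forall_mem_cons]
  tauto

lemma IsAlternating.tail {l : List (R₁ ⊕ R₂)} (h : IsAlternating φ₁ φ₂ l) :
    IsAlternating φ₁ φ₂ l.tail :=
  ⟨h.1.tail, fun x hx => h.2 x (List.mem_of_mem_tail hx)⟩

variable [StarRing R₁] [StarRing R₂] [Ring R] [Algebra ℂ R] [StarRing R]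
  (ι₁ : R₁ →⋆ₐ[ℂ] R) (ι₂ : R₂ →⋆ₐ[ℂ] R)

def reverseStar (l : List (R₁ ⊕ R₂)) : List (R₁ ⊕ R₂) := (l.map (Sum.map star star)).reverse

def wordProd (l : List (R₁ ⊕ R₂)) : R := (l.map (Sum.elim ι₁ ι₂)).prod

@[simp] lemma wordProd_nil : wordProd ι₁ ι₂ [] = 1 := rfl

@[simp] lemma wordProd_cons (x : R₁ ⊕ R₂) (l : List (R₁ ⊕ R₂)) :
    wordProd ι₁ ι₂ (x :: l) = Sum.elim ι₁ ι₂ x * wordProd ι₁ ι₂ l := List.prod_cons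

@[simp] lemma wordProd_append (l l' : List (R₁ ⊕ R₂)) :
    wordProd ι₁ ι₂ (l ++ l') = wordProd ι₁ ι₂ l * wordProd ι₁ ι₂ l' := by
  simp [wordProd]

lemma star_wordProd (l : List (R₁ ⊕ R₂)) :
    star (wordProd ι₁ ι₂ l) = wordProd ι₁ ι₂ (reverseStar l) := by
  induction l with
  | nil => simp [reverseStar]
  | cons x l ih =>
    simp only [reverseStar, List.map_cons, List.reverse_cons] at ih ⊢
    rw [wordProd_cons, star_mul, ih, wordProd_append]
    rcases x with y | y <;> simp [map_star]

variable {ι₁ ι₂} {φ : R →ₗ[ℂ] ℂ}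

lemma apply_wordProd_eq_zero
    (hfree : ∀ (L : List R) (c : List Bool) (hlen : L.length = c.length),
      c.IsChain (· ≠ ·) →
      (∀ i : Fin L.length,
        if c.get (Fin.cast hlen i) then ∃ y : R₁, ι₁ y = L.get i ∧ φ₁ y = 0
        else ∃ y : R₂, ι₂ y = L.get i ∧ φ₂ y = 0) →
      L ≠ [] → φ L.prod = 0)
    {l : List (R₁ ⊕ R₂)} (hl : IsAlternating φ₁ φ₂ l) (hne : l ≠ []) :
    φ (wordProd ι₁ ι₂ l) = 0 := by
  refine hfree _ (l.map Sum.isLeft) (by simp) (List.isChain_map _ |>.mpr hl.1) (fun i => ?_)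
    (by simpa using hne)
  obtain ⟨i, hi⟩ := i
  rw [List.length_map] at hi
  have hc := hl.2 _ (List.getElem_mem hi)
  simp only [List.get_eq_getElem, Fin.val_cast, List.getElem_map]
  generalize l[i] = x at hc ⊢
  rcases x with y | y
  exacts [⟨y, rfl, hc⟩, ⟨y, rfl, hc⟩]

section Span

variable (φ₁ φ₂ ι₁ ι₂) in
def alternatingProducts : Set R := wordProd ι₁ ι₂ '' {l | IsAlternating φ₁ φ₂ l}

variable (hu₁ : φ₁ 1 = 1) (hu₂ : φ₂ 1 = 1)
include hu₁ hu₂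

lemma letter_mul_wordProd_mem_span_of_isLeft_ne {x : R₁ ⊕ R₂} {l : List (R₁ ⊕ R₂)}
    (hl : IsAlternating φ₁ φ₂ l) (hx : ∀ y ∈ l.head?, x.isLeft ≠ y.isLeft) :
    Sum.elim ι₁ ι₂ x * wordProd ι₁ ι₂ l ∈
      Submodule.span ℂ (alternatingProducts φ₁ φ₂ ι₁ ι₂) := by
  have mem : ∀ l', IsAlternating φ₁ φ₂ l' →
      wordProd ι₁ ι₂ l' ∈ Submodule.span ℂ (alternatingProducts φ₁ φ₂ ι₁ ι₂) :=
    fun l' hl' => Submodule.subset_span ⟨l', hl', rfl⟩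
  rcases x with y | y
  · obtain ⟨z, hz, hy⟩ := exists_apply_eq_zero_and_map_eq_smul_one_add hu₁ ι₁ y
    rw [Sum.elim_inl, hy, add_mul, smul_mul_assoc, one_mul]
    exact add_mem (Submodule.smul_mem _ _ (mem l hl))
      (mem (.inl z :: l) (isAlternating_cons.2 ⟨hz, hx, hl⟩))
  · obtain ⟨z, hz, hy⟩ := exists_apply_eq_zero_and_map_eq_smul_one_add hu₂ ι₂ y
    rw [Sum.elim_inr, hy, add_mul, smul_mul_assoc, one_mul]
    exact add_mem (Submodule.smul_mem _ _ (mem l hl))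
      (mem (.inr z :: l) (isAlternating_cons.2 ⟨hz, hx, hl⟩))

lemma letter_mul_wordProd_mem_span (x : R₁ ⊕ R₂) {l : List (R₁ ⊕ R₂)}
    (hl : IsAlternating φ₁ φ₂ l) :
    Sum.elim ι₁ ι₂ x * wordProd ι₁ ι₂ l ∈
      Submodule.span ℂ (alternatingProducts φ₁ φ₂ ι₁ ι₂) := by
  rcases l with _ | ⟨x', t⟩
  · exact letter_mul_wordProd_mem_span_of_isLeft_ne hu₁ hu₂ hl (by simp)
  obtain ⟨-, ht, h't⟩ := isAlternating_cons.1 hl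
  by_cases hs : x.isLeft = x'.isLeft
  · rcases x with y | y <;> rcases x' with y' | y' <;> simp only [Sum.isLeft_inl,
      Sum.isLeft_inr, Bool.true_eq_false, Bool.false_eq_true] at hs
    · simpa [mul_assoc] using letter_mul_wordProd_mem_span_of_isLeft_ne hu₁ hu₂
        (ι₁ := ι₁) (ι₂ := ι₂) (x := .inl (y * y')) h't ht
    · simpa [mul_assoc] using letter_mul_wordProd_mem_span_of_isLeft_ne hu₁ hu₂
        (ι₁ := ι₁) (ι₂ := ι₂) (x := .inr (y * y')) h't ht
  · exact letter_mul_wordProd_mem_span_of_isLeft_ne hu₁ hu₂ hl (by simpa using hs)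

lemma span_alternatingProducts_eq_top
    (hgen : Algebra.adjoin ℂ (Set.range ι₁ ∪ Set.range ι₂) = ⊤) :
    Submodule.span ℂ (alternatingProducts φ₁ φ₂ ι₁ ι₂) = ⊤ := by
  set W := Submodule.span ℂ (alternatingProducts φ₁ φ₂ ι₁ ι₂)
  have hmul : ∀ a ∈ Algebra.adjoin ℂ (Set.range ι₁ ∪ Set.range ι₂), ∀ v ∈ W, a * v ∈ W := by
    intro a ha
    induction ha using Algebra.adjoin_induction with
    | mem a ha =>
      have hle : W ≤ W.comap (LinearMap.mulLeft ℂ a) := by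
        refine Submodule.span_le.2 ?_
        rintro _ ⟨l, hl, rfl⟩
        rcases ha with ⟨y, rfl⟩ | ⟨y, rfl⟩
        exacts [letter_mul_wordProd_mem_span hu₁ hu₂ (.inl y) hl,
          letter_mul_wordProd_mem_span hu₁ hu₂ (.inr y) hl]
      exact fun v hv => hle hv
    | algebraMap c =>
      intro v hv
      rw [Algebra.algebraMap_eq_smul_one, smul_mul_assoc, one_mul]
      exact W.smul_mem c hv
    | add a b _ _ ha hb =>
      intro v hv
      rw [add_mul]
      exact add_mem (ha v hv) (hb v hv)
    | mul a b _ _ ha hb =>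
      intro v hv
      rw [mul_assoc]
      exact ha _ (hb v hv)
  refine eq_top_iff.2 fun x _ => ?_
  simpa using hmul x (hgen ▸ Algebra.mem_top) 1 (Submodule.subset_span ⟨[], isAlternating_nil, rfl⟩)

lemma exists_sum_smul_wordProd_eq (hgen : Algebra.adjoin ℂ (Set.range ι₁ ∪ Set.range ι₂) = ⊤)
    (x : R) : ∃ (m : ℕ) (c : Fin m → ℂ) (w : Fin m → List (R₁ ⊕ R₂)),
      (∀ j, IsAlternating φ₁ φ₂ (w j)) ∧ ∑ j, c j • wordProd ι₁ ι₂ (w j) = x := by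
  have hx : x ∈ Submodule.span ℂ (alternatingProducts φ₁ φ₂ ι₁ ι₂) := by
    rw [span_alternatingProducts_eq_top hu₁ hu₂ hgen]
    exact Submodule.mem_top
  obtain ⟨m, c, g, hg⟩ := Submodule.mem_span_set'.1 hx
  choose w hw hwg using fun j => (g j).2
  exact ⟨m, c, w, hw, by simpa only [hwg] using hg⟩

end Span

variable [StarModule ℂ R₁] [StarModule ℂ R₂]

lemma isAlternating_reverseStar (hq₁ : ∀ x, 0 ≤ φ₁ (star x * x))
    (hq₂ : ∀ x, 0 ≤ φ₂ (star x * x)) {l : List (R₁ ⊕ R₂)} (h : IsAlternating φ₁ φ₂ l) :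
    IsAlternating φ₁ φ₂ (reverseStar l) := by
  refine ⟨?_, ?_⟩
  · rw [reverseStar, List.isChain_reverse, List.isChain_map]
    exact h.1.imp fun x y hxy => by simpa using hxy.symm
  · simp only [reverseStar, List.mem_reverse, List.mem_map]
    rintro _ ⟨x, hx, rfl⟩
    have hc := h.2 x hx
    rcases x with y | y <;> simp_all [IsCentered, LinearMap.apply_star]

lemma isAlternating_reverseStar_append (hq₁ : ∀ x, 0 ≤ φ₁ (star x * x))
    (hq₂ : ∀ x, 0 ≤ φ₂ (star x * x)) {l l' : List (R₁ ⊕ R₂)} (h : IsAlternating φ₁ φ₂ l)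
    (h' : IsAlternating φ₁ φ₂ l') (hj : ∀ x ∈ l.head?, ∀ y ∈ l'.head?, x.isLeft ≠ y.isLeft) :
    IsAlternating φ₁ φ₂ (reverseStar l ++ l') := by
  have hr := isAlternating_reverseStar hq₁ hq₂ h
  refine ⟨hr.1.append h'.1 ?_, fun x hx => ?_⟩
  · simp only [reverseStar, List.getLast?_reverse, List.head?_map, Option.mem_map]
    rintro _ ⟨x, hx, rfl⟩
    simpa using hj x hx
  · rcases List.mem_append.mp hx with hx | hx
    exacts [hr.2 x hx, h'.2 x hx]

def headLeft : List (R₁ ⊕ R₂) → R₁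
  | Sum.inl y :: _ => y
  | _ => 0

def headRight : List (R₁ ⊕ R₂) → R₂
  | Sum.inr y :: _ => y
  | _ => 0

section Gram

variable (hq₁ : ∀ x, 0 ≤ φ₁ (star x * x)) (hq₂ : ∀ x, 0 ≤ φ₂ (star x * x))
  (hvanish : ∀ l, IsAlternating φ₁ φ₂ l → l ≠ [] → φ (wordProd ι₁ ι₂ l) = 0)
include hq₁ hq₂ hvanish

lemma apply_star_wordProd_cons_mul_wordProd_cons_of_isLeft_ne {x x' : R₁ ⊕ R₂}
    {t t' : List (R₁ ⊕ R₂)} (h : IsAlternating φ₁ φ₂ (x :: t))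
    (h' : IsAlternating φ₁ φ₂ (x' :: t')) (hx : x.isLeft ≠ x'.isLeft) :
    φ (star (wordProd ι₁ ι₂ (x :: t)) * wordProd ι₁ ι₂ (x' :: t')) = 0 := by
  rw [star_wordProd, ← wordProd_append]
  exact hvanish _ (isAlternating_reverseStar_append hq₁ hq₂ h h' (by simpa using hx)) (by simp)

lemma apply_star_wordProd_cons_mul_wordProd_cons_of_star_mul_eq {x x' z : R₁ ⊕ R₂}
    {t t' : List (R₁ ⊕ R₂)} (h : IsAlternating φ₁ φ₂ (x :: t))
    (h' : IsAlternating φ₁ φ₂ (x' :: t')) (hz : IsCentered φ₁ φ₂ z)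
    (hxz : x.isLeft = z.isLeft) (hzx' : z.isLeft = x'.isLeft) {c : ℂ}
    (hc : star (Sum.elim ι₁ ι₂ x) * Sum.elim ι₁ ι₂ x' = c • 1 + Sum.elim ι₁ ι₂ z) :
    φ (star (wordProd ι₁ ι₂ (x :: t)) * wordProd ι₁ ι₂ (x' :: t')) =
      c * φ (star (wordProd ι₁ ι₂ t) * wordProd ι₁ ι₂ t') := by
  have hsplit : star (wordProd ι₁ ι₂ (x :: t)) * wordProd ι₁ ι₂ (x' :: t') =
      c • (star (wordProd ι₁ ι₂ t) * wordProd ι₁ ι₂ t') +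
        wordProd ι₁ ι₂ (reverseStar t ++ z :: t') := by
    rw [wordProd_append, ← star_wordProd, wordProd_cons, wordProd_cons, wordProd_cons, star_mul,
      mul_assoc, ← mul_assoc (star (Sum.elim ι₁ ι₂ x)), hc]
    simp only [add_mul, mul_add, smul_mul_assoc, one_mul, mul_smul_comm]
  have hw : IsAlternating φ₁ φ₂ (reverseStar t ++ z :: t') := by
    obtain ⟨-, ht, -⟩ := isAlternating_cons.1 h
    obtain ⟨-, ht', h't'⟩ := isAlternating_cons.1 h'
    refine isAlternating_reverseStar_append hq₁ hq₂ h.tail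
      (isAlternating_cons.2 ⟨hz, hzx' ▸ ht', h't'⟩) ?_
    rintro y hy _ ⟨⟩
    exact hxz ▸ (ht y hy).symm
  rw [hsplit, map_add, map_smul, hvanish _ hw (by simp), smul_eq_mul, add_zero]

lemma apply_star_wordProd_mul_wordProd (hu₁ : φ₁ 1 = 1) (hu₂ : φ₂ 1 = 1) (hu : φ 1 = 1)
    {l l' : List (R₁ ⊕ R₂)} (h : IsAlternating φ₁ φ₂ l) (h' : IsAlternating φ₁ φ₂ l') :
    φ (star (wordProd ι₁ ι₂ l) * wordProd ι₁ ι₂ l') =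
      (if l = [] then 1 else 0) * (if l' = [] then 1 else 0) +
        (φ₁ (star (headLeft l) * headLeft l') + φ₂ (star (headRight l) * headRight l')) *
          φ (star (wordProd ι₁ ι₂ l.tail) * wordProd ι₁ ι₂ l'.tail) := by
  rcases l with _ | ⟨x, t⟩ <;> rcases l' with _ | ⟨x', t'⟩
  · simp [hu, headLeft, headRight]
  · simpa [headLeft, headRight] using hvanish _ h' (List.cons_ne_nil _ _)
  · rw [wordProd_nil, mul_one, star_wordProd,
      hvanish _ (isAlternating_reverseStar hq₁ hq₂ h) (by simp [reverseStar])]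
    simp [headLeft, headRight]
  · rcases x with y | y <;> rcases x' with y' | y'
    · obtain ⟨z, hz, hy⟩ := exists_apply_eq_zero_and_map_eq_smul_one_add hu₁ ι₁ (star y * y')
      rw [apply_star_wordProd_cons_mul_wordProd_cons_of_star_mul_eq hq₁ hq₂ hvanish h h'
        (z := .inl z) hz rfl rfl (by simpa [map_star] using hy)]
      simp [headLeft, headRight]
    · rw [apply_star_wordProd_cons_mul_wordProd_cons_of_isLeft_ne hq₁ hq₂ hvanish h h' (by simp)]
      simp [headLeft, headRight]
    · rw [apply_star_wordProd_cons_mul_wordProd_cons_of_isLeft_ne hq₁ hq₂ hvanish h h' (by simp)]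
      simp [headLeft, headRight]
    · obtain ⟨z, hz, hy⟩ := exists_apply_eq_zero_and_map_eq_smul_one_add hu₂ ι₂ (star y * y')
      rw [apply_star_wordProd_cons_mul_wordProd_cons_of_star_mul_eq hq₁ hq₂ hvanish h h'
        (z := .inr z) hz rfl rfl (by simpa [map_star] using hy)]
      simp [headLeft, headRight]

lemma gram_wordProd (hu₁ : φ₁ 1 = 1) (hu₂ : φ₂ 1 = 1) (hu : φ 1 = 1) {ι : Type*}
    (w : ι → List (R₁ ⊕ R₂)) (hw : ∀ j, IsAlternating φ₁ φ₂ (w j)) :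
    φ.gram (wordProd ι₁ ι₂ ∘ w) =
      vecMulVec (star fun j => if w j = [] then 1 else 0) (fun j => if w j = [] then 1 else 0) +
        φ₁.gram (headLeft ∘ w) ⊙ φ.gram (wordProd ι₁ ι₂ ∘ List.tail ∘ w) +
        φ₂.gram (headRight ∘ w) ⊙ φ.gram (wordProd ι₁ ι₂ ∘ List.tail ∘ w) := by
  ext j k
  rw [LinearMap.gram_apply, Function.comp_apply, Function.comp_apply,
    apply_star_wordProd_mul_wordProd hq₁ hq₂ hvanish hu₁ hu₂ hu (hw j) (hw k)]
  simp [vecMulVec_apply, add_mul, add_assoc, apply_ite]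

lemma posSemidef_gram_wordProd_of_length_le (hu₁ : φ₁ 1 = 1) (hu₂ : φ₂ 1 = 1) (hu : φ 1 = 1)
    {ι : Type*} [Fintype ι] (N : ℕ) (w : ι → List (R₁ ⊕ R₂))
    (hw : ∀ j, IsAlternating φ₁ φ₂ (w j)) (hN : ∀ j, (w j).length ≤ N) :
    (φ.gram (wordProd ι₁ ι₂ ∘ w)).PosSemidef := by
  induction N generalizing w with
  | zero =>
    have hnil : ∀ j, w j = [] := fun j => List.eq_nil_of_length_eq_zero (Nat.le_zero.mp (hN j))
    convert posSemidef_vecMulVec_star_self (fun _ : ι => (1 : ℂ))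
    ext j k
    simp [hnil, hu, vecMulVec_apply]
  | succ N ih =>
    have htail := ih (List.tail ∘ w) (fun j => (hw j).tail) fun j => by
      simpa using Nat.sub_le_of_le_add (hN j)
    rw [gram_wordProd hq₁ hq₂ hvanish hu₁ hu₂ hu w hw]
    exact ((posSemidef_vecMulVec_star_self _).add
      ((LinearMap.posSemidef_gram hq₁ _).hadamard htail)).add
      ((LinearMap.posSemidef_gram hq₂ _).hadamard htail)

lemma posSemidef_gram_wordProd (hu₁ : φ₁ 1 = 1) (hu₂ : φ₂ 1 = 1) (hu : φ 1 = 1)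
    {ι : Type*} [Fintype ι] (w : ι → List (R₁ ⊕ R₂)) (hw : ∀ j, IsAlternating φ₁ φ₂ (w j)) :
    (φ.gram (wordProd ι₁ ι₂ ∘ w)).PosSemidef :=
  posSemidef_gram_wordProd_of_length_le hq₁ hq₂ hvanish hu₁ hu₂ hu _ w hw fun j =>
    Finset.le_sup (f := fun j => (w j).length) (Finset.mem_univ j)

end Gram

end FreeProductWord

theorem stmt17_general {R₁ R₂ R : Type*}
    [Ring R₁] [Algebra ℂ R₁] [StarRing R₁] [StarModule ℂ R₁]
    [Ring R₂] [Algebra ℂ R₂] [StarRing R₂] [StarModule ℂ R₂]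
    [Ring R] [Algebra ℂ R] [StarRing R] [StarModule ℂ R]
    (φ₁ : R₁ →ₗ[ℂ] ℂ) (φ₂ : R₂ →ₗ[ℂ] ℂ)
    (hφ₁u : φ₁ 1 = 1) (hφ₂u : φ₂ 1 = 1)
    (hφ₁q : ∀ x : R₁, 0 ≤ φ₁ (star x * x))
    (hφ₂q : ∀ x : R₂, 0 ≤ φ₂ (star x * x))
    (ι₁ : R₁ →⋆ₐ[ℂ] R) (ι₂ : R₂ →⋆ₐ[ℂ] R)
    (hgen : Algebra.adjoin ℂ (Set.range ι₁ ∪ Set.range ι₂) = ⊤)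
    (φ : R →ₗ[ℂ] ℂ) (hφu : φ 1 = 1)
    (hfree : ∀ (L : List R) (c : List Bool) (hlen : L.length = c.length),
      c.Chain' (· ≠ ·) →
      (∀ i : Fin L.length,
        if c.get (Fin.cast hlen i) then ∃ y : R₁, ι₁ y = L.get i ∧ φ₁ y = 0
        else ∃ y : R₂, ι₂ y = L.get i ∧ φ₂ y = 0) →
      L ≠ [] → φ L.prod = 0) :
    ∀ x : R, 0 ≤ φ (star x * x) := by
  intro x
  obtain ⟨m, c, w, hw, rfl⟩ := FreeProductWord.exists_sum_smul_wordProd_eq hφ₁u hφ₂u hgen x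
  rw [← LinearMap.star_dotProduct_gram_mulVec]
  have hvanish := fun l => FreeProductWord.apply_wordProd_eq_zero (l := l) hfree
  exact (FreeProductWord.posSemidef_gram_wordProd hφ₁q hφ₂q hvanish hφ₁u hφ₂u hφu w hw
    ).dotProduct_mulVec_nonneg c

/-- Positivity of the free product of q-positive unital functionals.  Let `φ₁, φ₂` be
q-positive unital linear functionals on unital complex `*`-algebras `R₁, R₂`, and let `R`
(a model of the free product `R₁ ⋆ R₂`) carry star-algebra embeddings `ι₁, ι₂` whose
ranges generate `R`, with a unital linear functional `φ` extending `φ₁, φ₂` that vanishes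
on every nonempty alternating product of centered elements (the free product functional).
Then `φ` is q-positive: `φ(x* x) ≥ 0` for all `x ∈ R₁ ⋆ R₂`. -/
theorem stmt17 {R₁ R₂ R : Type*}
    [Ring R₁] [Algebra ℂ R₁] [StarRing R₁] [StarModule ℂ R₁]
    [Ring R₂] [Algebra ℂ R₂] [StarRing R₂] [StarModule ℂ R₂]
    [Ring R] [Algebra ℂ R] [StarRing R] [StarModule ℂ R]
    (φ₁ : R₁ →ₗ[ℂ] ℂ) (φ₂ : R₂ →ₗ[ℂ] ℂ)
    (hφ₁u : φ₁ 1 = 1) (hφ₂u : φ₂ 1 = 1)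
    (hφ₁q : ∀ x : R₁, 0 ≤ φ₁ (star x * x))
    (hφ₂q : ∀ x : R₂, 0 ≤ φ₂ (star x * x))
    (ι₁ : R₁ →⋆ₐ[ℂ] R) (ι₂ : R₂ →⋆ₐ[ℂ] R)
    (hgen : Algebra.adjoin ℂ (Set.range ι₁ ∪ Set.range ι₂) = ⊤)
    (φ : R →ₗ[ℂ] ℂ) (hφu : φ 1 = 1)
    (hres₁ : ∀ x : R₁, φ (ι₁ x) = φ₁ x)
    (hres₂ : ∀ x : R₂, φ (ι₂ x) = φ₂ x)
    (hfree : ∀ (L : List R) (c : List Bool) (hlen : L.length = c.length),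
      c.Chain' (· ≠ ·) →
      (∀ i : Fin L.length,
        if c.get (Fin.cast hlen i) then ∃ y : R₁, ι₁ y = L.get i ∧ φ₁ y = 0
        else ∃ y : R₂, ι₂ y = L.get i ∧ φ₂ y = 0) →
      L ≠ [] → φ L.prod = 0) :
    ∀ x : R, 0 ≤ φ (star x * x) :=
  stmt17_general φ₁ φ₂ hφ₁u hφ₂u hφ₁q hφ₂q ι₁ ι₂ hgen φ hφu hfree
end

section
/- Let K be a scalar positive definite kernel on ℕ with K(l,l) = 1 for all l, and let {γ_{k,j}}_{0≤k≤j} with γ_{k,k} = 0 be its associated Schur parameters (contractions with |γ_{k,j}| ≤ 1) from the structure theorem K(l,m) = P U_{l,m} restricted appropriately. Then for l < m, K(l,m) = Σ_{q ∈ D^l_m} Π_{l≤i<j≤m} a_{i,j}(q), where the sum is over Dyck subpaths q starting at (2l,0) of length 2(m−l), and a_{i,j}(q) equals 1 if (j+i,j−i) ∉ q; γ_{i,j} if the path has a rise then fall at (j+i,j−i); −conj(γ_{i,j}) if fall then rise; and d_{i,j} = (1−|γ_{i,j}|²)^{1/2} if two consecutive rises or two consecutive falls. -/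
open Matrix

open scoped ComplexConjugate ComplexOrder

/-- The defect `d_γ = (1 - |γ|²)^{1/2}` of a scalar contraction, as a complex number. -/
noncomputable def defect (g : ℂ) : ℂ := ((Real.sqrt (1 - ‖g‖ ^ 2) : ℝ) : ℂ)

/-- The Julia matrix `J(g) = [[g, d_g], [d_g, -conj g]]` embedded in an `m × m` identity
matrix at rows/columns `r, r+1`, i.e. the factor `I_r ⊕ J(g) ⊕ I_{m-r-2}`. -/
noncomputable def juliaEmb (m r : ℕ) (g : ℂ) : Matrix (Fin m) (Fin m) ℂ :=
  Matrix.of fun i j =>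
    if (i : ℕ) = r ∧ (j : ℕ) = r then g
    else if (i : ℕ) = r ∧ (j : ℕ) = r + 1 then defect g
    else if (i : ℕ) = r + 1 ∧ (j : ℕ) = r then defect g
    else if (i : ℕ) = r + 1 ∧ (j : ℕ) = r + 1 then -conj g
    else if i = j then 1 else 0

/-- The unitaries `U_{k,k+d}` of the structure theorem for positive definite kernels,
defined recursively by `U_{k,k} = I` and
`U_{k,j} = (J(γ_{k,k+1}) ⊕ I)(I ⊕ J(γ_{k,k+2}) ⊕ I) ⋯ (I ⊕ J(γ_{k,j})) (U_{k+1,j} ⊕ I₁)`. -/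
noncomputable def Umat (γ : ℕ → ℕ → ℂ) : (d : ℕ) → (k : ℕ) → Matrix (Fin (d + 1)) (Fin (d + 1)) ℂ
  | 0, _ => 1
  | d + 1, k =>
      (((List.range (d + 1)).map fun r => juliaEmb (d + 2) r (γ k (k + r + 1))).prod) *
        (Matrix.reindex finSumFinEquiv finSumFinEquiv
          (Matrix.fromBlocks (Umat γ d (k + 1)) 0 0 (1 : Matrix (Fin 1) (Fin 1) ℂ)))

/-- The height of the lattice path with steps `s` after `j` steps. -/
def hgt (s : ℕ → Bool) (j : ℕ) : ℤ :=
  ∑ r ∈ Finset.range j, (if s r then 1 else -1)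

/-- Extension of a finitely indexed step sequence to `ℕ`. -/
def sext {L : ℕ} (s : Fin L → Bool) : ℕ → Bool :=
  fun r => if h : r < L then s ⟨r, h⟩ else true

/-- A Dyck path of length `L` (from `(0,0)` to `(L,0)`, staying weakly above the axis). -/
def IsDyckFun (L : ℕ) (s : Fin L → Bool) : Prop :=
  hgt (sext s) L = 0 ∧ ∀ j : Fin (L + 1), 0 ≤ hgt (sext s) (j : ℕ)

instance (L : ℕ) : DecidablePred (IsDyckFun L) := fun _ => by
  unfold IsDyckFun; infer_instance

/-- The weight `a_{i,j}(q)` of the point `x = (j+i, j-i)` for the Dyck subpath starting at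
`(2l,0)` with steps `s`: it is `1` if `x ∉ q`; `γ_{i,j}` for a rise followed by a fall
at `x`; `-conj γ_{i,j}` for a fall followed by a rise; and `d_{i,j} = (1-|γ_{i,j}|²)^{1/2}`
for two consecutive rises or two consecutive falls. -/
noncomputable def pathWeight (γ : ℕ → ℕ → ℂ) (l : ℕ) (s : ℕ → Bool) (i j : ℕ) : ℂ :=
  if hgt s (j + i - 2 * l) = (j : ℤ) - (i : ℤ) then
    (if s (j + i - 2 * l - 1) = true ∧ s (j + i - 2 * l) = false then γ i j
     else if s (j + i - 2 * l - 1) = false ∧ s (j + i - 2 * l) = true then -conj (γ i j)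
     else defect (γ i j))
  else 1

/-- A scalar kernel on `ℕ` is positive definite. -/
def IsPDKernelN (K : ℕ → ℕ → ℂ) : Prop :=
  ∀ (m : ℕ) (x : Fin m → ℕ) (c : Fin m → ℂ),
    0 ≤ ∑ i, ∑ j, conj (c i) * K (x i) (x j) * c j

namespace Stmt18Aux

def risesCt (s : ℕ → Bool) (y : ℕ) : ℕ := ((Finset.range y).filter fun r => s r = true).card
def fallsCt (s : ℕ → Bool) (y : ℕ) : ℕ := ((Finset.range y).filter fun r => s r = false).card

lemma hgt_succ (s : ℕ → Bool) (y : ℕ) :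
    hgt s (y + 1) = hgt s y + (if s y then 1 else -1) := by
  simp [hgt, Finset.sum_range_succ]

lemma risesCt_succ (s : ℕ → Bool) (y : ℕ) :
    risesCt s (y + 1) = risesCt s y + (if s y then 1 else 0) := by
  simp only [risesCt, Finset.range_add_one]
  rw [Finset.filter_insert]
  split <;> simp [Finset.card_insert_of_notMem]

lemma fallsCt_succ (s : ℕ → Bool) (y : ℕ) :
    fallsCt s (y + 1) = fallsCt s y + (if s y then 0 else 1) := by
  simp only [fallsCt, Finset.range_add_one]
  rw [Finset.filter_insert]
  rcases h : s y <;> simp [h, Finset.card_insert_of_notMem]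

lemma hgt_eq_sub (s : ℕ → Bool) (y : ℕ) :
    hgt s y = (risesCt s y : ℤ) - (fallsCt s y : ℤ) := by
  induction y with
  | zero => simp [hgt, risesCt, fallsCt]
  | succ y ih =>
    rw [hgt_succ, risesCt_succ, fallsCt_succ, ih]
    rcases h : s y <;> simp [h] <;> push_cast <;> ring

lemma risesCt_add_fallsCt (s : ℕ → Bool) (y : ℕ) :
    risesCt s y + fallsCt s y = y := by
  induction y with
  | zero => simp [risesCt, fallsCt]
  | succ y ih =>
    rw [risesCt_succ, fallsCt_succ]
    rcases h : s y <;> simp [h] <;> omega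

lemma hgt_ext {s s' : ℕ → Bool} {y : ℕ} (h : ∀ r < y, s r = s' r) :
    hgt s y = hgt s' y := by
  unfold hgt
  exact Finset.sum_congr rfl fun r hr => by rw [h r (Finset.mem_range.mp hr)]

lemma risesCt_ext {s s' : ℕ → Bool} {y : ℕ} (h : ∀ r < y, s r = s' r) :
    risesCt s y = risesCt s' y := by
  unfold risesCt
  congr 1
  exact Finset.filter_congr fun r hr => by rw [h r (Finset.mem_range.mp hr)]

lemma fallsCt_ext {s s' : ℕ → Bool} {y : ℕ} (h : ∀ r < y, s r = s' r) :
    fallsCt s y = fallsCt s' y := by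
  unfold fallsCt
  congr 1
  exact Finset.filter_congr fun r hr => by rw [h r (Finset.mem_range.mp hr)]

lemma hgt_lipschitz (s : ℕ → Bool) {x y : ℕ} (h : x ≤ y) :
    hgt s y - hgt s x ≤ (y : ℤ) - x ∧ (x : ℤ) - y ≤ hgt s y - hgt s x := by
  induction y with
  | zero => simp_all
  | succ y ih =>
    rcases Nat.lt_or_ge x (y+1) with hx | hx
    · have := ih (by omega)
      rw [hgt_succ]
      rcases h' : s y <;> simp [h'] <;> push_cast <;> omega
    · have : x = y + 1 := by omega
      subst this; simp


def prevb (s : ℕ → Bool) (y : ℕ) : Bool := if y = 0 then false else s (y - 1)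

noncomputable def wgt (γ : ℕ → ℕ → ℂ) (k a : ℕ) (s : ℕ → Bool) (y : ℕ) : ℂ :=
  if (a : ℤ) + hgt s y = 0 then 1
  else if prevb s y = true ∧ s y = false then γ (k + fallsCt s y) (k + a + risesCt s y)
  else if prevb s y = false ∧ s y = true then
    -conj (γ (k + fallsCt s y) (k + a + risesCt s y))
  else defect (γ (k + fallsCt s y) (k + a + risesCt s y))

def ValidP (a L : ℕ) (s : ℕ → Bool) : Prop :=
  (a : ℤ) + hgt s L = 0 ∧ ∀ y, y ≤ L → 0 ≤ (a : ℤ) + hgt s y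

instance (a L : ℕ) (s : ℕ → Bool) : Decidable (ValidP a L s) := by
  unfold ValidP; infer_instance

lemma wgt_ext (γ : ℕ → ℕ → ℂ) (k a : ℕ) {s s' : ℕ → Bool} {y : ℕ}
    (h : ∀ r ≤ y, s r = s' r) : wgt γ k a s y = wgt γ k a s' y := by
  have h1 : ∀ r < y, s r = s' r := fun r hr => h r hr.le
  unfold wgt prevb
  rw [hgt_ext h1, risesCt_ext h1, fallsCt_ext h1, h y le_rfl]
  rcases Nat.eq_zero_or_pos y with hy | hy
  · simp [hy]
  · rw [h1 (y-1) (by omega)]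

lemma validP_ext {a L : ℕ} {s s' : ℕ → Bool} (h : ∀ r < L, s r = s' r) :
    ValidP a L s ↔ ValidP a L s' := by
  unfold ValidP
  rw [hgt_ext h]
  refine and_congr_right fun _ => ?_
  exact forall_congr' fun y => imp_congr_right fun hy =>
    by rw [hgt_ext (fun r hr => h r (lt_of_lt_of_le hr hy))]

noncomputable def Bsum (γ : ℕ → ℕ → ℂ) (d k a : ℕ) : ℂ :=
  ∑ s ∈ Finset.univ.filter (fun s : Fin (2 * d - a) → Bool =>
      ValidP a (2 * d - a) (sext s)),
    ∏ y ∈ Finset.range (2 * d - a), wgt γ k a (sext s) y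

noncomputable def coefQ (γ : ℕ → ℕ → ℂ) (k D a b : ℕ) : ℂ :=
  if b + 1 = a then defect (γ k (k + a))
  else if a ≤ b ∧ b ≤ D then
    (if a = 0 then 1 else -conj (γ k (k + a))) *
      (∏ r ∈ Finset.Ico a b, defect (γ k (k + r + 1))) *
      (if b = D then 1 else γ k (k + b + 1))
  else 0


lemma juliaEmb_col_ne {m r : ℕ} (g : ℂ) {i j : Fin m} (hj1 : (j : ℕ) ≠ r)
    (hj2 : (j : ℕ) ≠ r + 1) : juliaEmb m r g i j = if i = j then 1 else 0 := by
  simp [juliaEmb, hj1, hj2]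

lemma juliaEmb_row_ne {m r : ℕ} (g : ℂ) {i j : Fin m} (hi1 : (i : ℕ) ≠ r)
    (hi2 : (i : ℕ) ≠ r + 1) : juliaEmb m r g i j = if i = j then 1 else 0 := by
  simp [juliaEmb, hi1, hi2]

lemma juliaEmb_ap {m r : ℕ} (g : ℂ) (i j : Fin m) (hi : (i : ℕ) = r) (hj : (j : ℕ) = r) :
    juliaEmb m r g i j = g := by simp [juliaEmb, hi, hj]

lemma juliaEmb_ap01 {m r : ℕ} (g : ℂ) (i j : Fin m) (hi : (i : ℕ) = r)
    (hj : (j : ℕ) = r + 1) : juliaEmb m r g i j = defect g := by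
  simp [juliaEmb, hi, hj]

lemma juliaEmb_ap10 {m r : ℕ} (g : ℂ) (i j : Fin m) (hi : (i : ℕ) = r + 1)
    (hj : (j : ℕ) = r) : juliaEmb m r g i j = defect g := by
  simp [juliaEmb, hi, hj]

lemma juliaEmb_ap11 {m r : ℕ} (g : ℂ) (i j : Fin m) (hi : (i : ℕ) = r + 1)
    (hj : (j : ℕ) = r + 1) : juliaEmb m r g i j = -conj g := by
  simp [juliaEmb, hi, hj]

lemma coefQ_stable {γ : ℕ → ℕ → ℂ} {k n a b : ℕ} (hb1 : b ≠ n) (hb2 : b ≠ n + 1) :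
    coefQ γ k (n + 1) a b = coefQ γ k n a b := by
  unfold coefQ
  split_ifs <;> first | rfl | omega

lemma Qpart_entry (γ : ℕ → ℕ → ℂ) (k d : ℕ) :
    ∀ n, n ≤ d + 1 → ∀ a b : Fin (d + 2),
      (((List.range n).map fun r => juliaEmb (d + 2) r (γ k (k + r + 1))).prod) a b =
        if (a : ℕ) ≤ n then coefQ γ k n (a : ℕ) (b : ℕ) else if a = b then 1 else 0 := by
  intro n
  induction n with
  | zero =>
    intro _ a b
    simp only [List.range_zero, List.map_nil, List.prod_nil, Nat.le_zero]
    rw [Matrix.one_apply]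
    by_cases ha : (a : ℕ) = 0
    · rw [if_pos ha, ha]
      unfold coefQ
      by_cases hb : (b : ℕ) = 0
      · have hab : a = b := Fin.ext (by omega)
        rw [if_pos hab, hb]
        simp
      · have hab : a ≠ b := fun h => hb (by rw [← h]; exact ha)
        rw [if_neg hab, if_neg (by omega), if_neg (by omega)]
    · rw [if_neg ha]
  | succ n ih =>
    intro hn a b
    have hnd : n ≤ d + 1 := by omega
    rw [List.range_succ, List.map_append, List.prod_append]
    simp only [List.map_cons, List.map_nil, List.prod_cons, List.prod_nil, mul_one]
    rw [Matrix.mul_apply]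
    have hn1 : n + 1 < d + 2 := by omega
    by_cases hb : (b : ℕ) = n
    · have hsum : ∀ Q : Matrix (Fin (d + 2)) (Fin (d + 2)) ℂ,
          ∑ c, Q a c * juliaEmb (d + 2) n (γ k (k + n + 1)) c b
          = Q a ⟨n, by omega⟩ * juliaEmb (d + 2) n (γ k (k + n + 1)) ⟨n, by omega⟩ b
            + Q a ⟨n + 1, hn1⟩ * juliaEmb (d + 2) n (γ k (k + n + 1)) ⟨n + 1, hn1⟩ b := by
        intro Q
        refine Eq.trans ?_ (Finset.sum_pair
          (f := fun c => Q a c * juliaEmb (d + 2) n (γ k (k + n + 1)) c b)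
          (show (⟨n, by omega⟩ : Fin (d + 2)) ≠ ⟨n + 1, hn1⟩ by simp [Fin.ext_iff]))
        refine (Finset.sum_subset (Finset.subset_univ _) ?_).symm
        intro c _ hc
        simp only [Finset.mem_insert, Finset.mem_singleton, not_or] at hc
        have hc1 : (c : ℕ) ≠ n := fun h => hc.1 (Fin.ext h)
        have hc2 : (c : ℕ) ≠ n + 1 := fun h => hc.2 (Fin.ext h)
        rw [juliaEmb_row_ne _ hc1 hc2, if_neg (fun h => hc1 (by rw [h, hb])), mul_zero]
      rw [hsum, juliaEmb_ap (r := n) _ _ b rfl hb, juliaEmb_ap10 (r := n) _ _ b rfl hb,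
        ih hnd a ⟨n, by omega⟩, ih hnd a ⟨n + 1, hn1⟩]
      simp only [Fin.val_mk]
      by_cases ha : (a : ℕ) ≤ n
      · rw [if_pos ha, if_pos ha, if_pos (show (a : ℕ) ≤ n + 1 from by omega), hb]
        have e1 : coefQ γ k n (a : ℕ) n =
            (if (a : ℕ) = 0 then 1 else -conj (γ k (k + a))) *
              ∏ r ∈ Finset.Ico (a : ℕ) n, defect (γ k (k + r + 1)) := by
          unfold coefQ
          rw [if_neg (show ¬ (n + 1 = (a : ℕ)) from by omega), if_pos ⟨ha, le_rfl⟩,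
            if_pos (show n = n from rfl), mul_one]
        have e2 : coefQ γ k n (a : ℕ) (n + 1) = 0 := by
          unfold coefQ
          rw [if_neg (show ¬ (n + 1 + 1 = (a : ℕ)) from by omega),
            if_neg (show ¬ ((a : ℕ) ≤ n + 1 ∧ n + 1 ≤ n) from by omega)]
        have e3 : coefQ γ k (n + 1) (a : ℕ) n =
            ((if (a : ℕ) = 0 then 1 else -conj (γ k (k + a))) *
              ∏ r ∈ Finset.Ico (a : ℕ) n, defect (γ k (k + r + 1))) * γ k (k + n + 1) := by
          unfold coefQ
          rw [if_neg (show ¬ (n + 1 = (a : ℕ)) from by omega),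
            if_pos (show (a : ℕ) ≤ n ∧ n ≤ n + 1 from ⟨ha, by omega⟩),
            if_neg (show ¬ (n = n + 1) from by omega)]
        rw [e1, e2, e3]
        ring
      · rw [if_neg ha, if_neg ha]
        by_cases ha' : (a : ℕ) = n + 1
        · rw [if_pos (show (a : ℕ) ≤ n + 1 from by omega)]
          have h1 : a ≠ (⟨n, by omega⟩ : Fin (d + 2)) := fun h => ha (by simp only [Fin.ext_iff, Fin.val_mk] at h; omega)
          have h2 : a = (⟨n + 1, hn1⟩ : Fin (d + 2)) := Fin.ext ha'
          rw [if_neg h1, if_pos h2, hb, ha']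
          have e4 : coefQ γ k (n + 1) (n + 1) n = defect (γ k (k + n + 1)) := by
            unfold coefQ
            rw [if_pos (show n + 1 = n + 1 from rfl)]
            rfl
          rw [e4]
          ring
        · rw [if_neg (show ¬ (a : ℕ) ≤ n + 1 from by omega)]
          have h1 : a ≠ (⟨n, by omega⟩ : Fin (d + 2)) := fun h => ha (by simp only [Fin.ext_iff, Fin.val_mk] at h; omega)
          have h2 : a ≠ (⟨n + 1, hn1⟩ : Fin (d + 2)) := fun h => ha' (by simp only [Fin.ext_iff, Fin.val_mk] at h; omega)
          have h3 : a ≠ b := fun h => ha (by simp only [Fin.ext_iff, Fin.val_mk] at h; omega)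
          rw [if_neg h1, if_neg h2, if_neg h3]
          ring
    · by_cases hb1 : (b : ℕ) = n + 1
      · have hsum : ∀ Q : Matrix (Fin (d + 2)) (Fin (d + 2)) ℂ,
            ∑ c, Q a c * juliaEmb (d + 2) n (γ k (k + n + 1)) c b
            = Q a ⟨n, by omega⟩ * juliaEmb (d + 2) n (γ k (k + n + 1)) ⟨n, by omega⟩ b
              + Q a ⟨n + 1, hn1⟩ * juliaEmb (d + 2) n (γ k (k + n + 1)) ⟨n + 1, hn1⟩ b := by
          intro Q
          refine Eq.trans ?_ (Finset.sum_pair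
            (f := fun c => Q a c * juliaEmb (d + 2) n (γ k (k + n + 1)) c b)
            (show (⟨n, by omega⟩ : Fin (d + 2)) ≠ ⟨n + 1, hn1⟩ by simp [Fin.ext_iff]))
          refine (Finset.sum_subset (Finset.subset_univ _) ?_).symm
          intro c _ hc
          simp only [Finset.mem_insert, Finset.mem_singleton, not_or] at hc
          have hc1 : (c : ℕ) ≠ n := fun h => hc.1 (Fin.ext h)
          have hc2 : (c : ℕ) ≠ n + 1 := fun h => hc.2 (Fin.ext h)
          rw [juliaEmb_row_ne _ hc1 hc2, if_neg (fun h => hc2 (by rw [h, hb1])), mul_zero]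
        rw [hsum, juliaEmb_ap01 (r := n) _ _ b rfl hb1, juliaEmb_ap11 (r := n) _ _ b rfl hb1,
          ih hnd a ⟨n, by omega⟩, ih hnd a ⟨n + 1, hn1⟩]
        simp only [Fin.val_mk]
        by_cases ha : (a : ℕ) ≤ n
        · rw [if_pos ha, if_pos ha, if_pos (show (a : ℕ) ≤ n + 1 from by omega), hb1]
          have e1 : coefQ γ k n (a : ℕ) n =
              (if (a : ℕ) = 0 then 1 else -conj (γ k (k + a))) *
                ∏ r ∈ Finset.Ico (a : ℕ) n, defect (γ k (k + r + 1)) := by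
            unfold coefQ
            rw [if_neg (show ¬ (n + 1 = (a : ℕ)) from by omega), if_pos ⟨ha, le_rfl⟩,
              if_pos (show n = n from rfl), mul_one]
          have e2 : coefQ γ k n (a : ℕ) (n + 1) = 0 := by
            unfold coefQ
            rw [if_neg (show ¬ (n + 1 + 1 = (a : ℕ)) from by omega),
              if_neg (show ¬ ((a : ℕ) ≤ n + 1 ∧ n + 1 ≤ n) from by omega)]
          have e3 : coefQ γ k (n + 1) (a : ℕ) (n + 1) =
              ((if (a : ℕ) = 0 then 1 else -conj (γ k (k + a))) *
                ∏ r ∈ Finset.Ico (a : ℕ) n, defect (γ k (k + r + 1))) *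
                defect (γ k (k + n + 1)) := by
            unfold coefQ
            rw [if_neg (show ¬ (n + 1 + 1 = (a : ℕ)) from by omega),
              if_pos (show (a : ℕ) ≤ n + 1 ∧ n + 1 ≤ n + 1 from ⟨by omega, le_rfl⟩),
              if_pos (show n + 1 = n + 1 from rfl), mul_one,
              Finset.prod_Ico_succ_top ha]
            ring
          rw [e1, e2, e3]
          ring
        · rw [if_neg ha, if_neg ha]
          by_cases ha' : (a : ℕ) = n + 1
          · rw [if_pos (show (a : ℕ) ≤ n + 1 from by omega)]
            have h1 : a ≠ (⟨n, by omega⟩ : Fin (d + 2)) := fun h => ha (by simp only [Fin.ext_iff, Fin.val_mk] at h; omega)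
            have h2 : a = (⟨n + 1, hn1⟩ : Fin (d + 2)) := Fin.ext ha'
            rw [if_neg h1, if_pos h2, hb1, ha']
            have e4 : coefQ γ k (n + 1) (n + 1) (n + 1) = -conj (γ k (k + (n + 1))) := by
              unfold coefQ
              rw [if_neg (show ¬ (n + 1 + 1 = n + 1) from by omega),
                if_pos (show n + 1 ≤ n + 1 ∧ n + 1 ≤ n + 1 from ⟨le_rfl, le_rfl⟩),
                if_neg (show ¬ (n + 1 = 0) from by omega),
                if_pos (show n + 1 = n + 1 from rfl), Finset.Ico_self,
                Finset.prod_empty, mul_one, mul_one]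
            rw [e4]
            ring
          · rw [if_neg (show ¬ (a : ℕ) ≤ n + 1 from by omega)]
            have h1 : a ≠ (⟨n, by omega⟩ : Fin (d + 2)) := fun h => ha (by simp only [Fin.ext_iff, Fin.val_mk] at h; omega)
            have h2 : a ≠ (⟨n + 1, hn1⟩ : Fin (d + 2)) := fun h => ha' (by simp only [Fin.ext_iff, Fin.val_mk] at h; omega)
            have h3 : a ≠ b := fun h => ha' (by simp only [Fin.ext_iff, Fin.val_mk] at h; omega)
            rw [if_neg h1, if_neg h2, if_neg h3]
            ring
      · have hJ : ∀ c : Fin (d + 2), juliaEmb (d + 2) n (γ k (k + n + 1)) c b =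
            if c = b then 1 else 0 := fun c => juliaEmb_col_ne _ hb hb1
        simp only [hJ, mul_ite, mul_one, mul_zero, Finset.sum_ite_eq', Finset.mem_univ,
          if_true]
        rw [ih hnd a b]
        by_cases ha : (a : ℕ) ≤ n
        · rw [if_pos ha, if_pos (show (a : ℕ) ≤ n + 1 from by omega),
            coefQ_stable hb hb1]
        · rw [if_neg ha]
          by_cases ha' : (a : ℕ) = n + 1
          · have hab : a ≠ b := fun h => hb1 (by rw [← h, ha'])
            rw [if_neg hab, if_pos (show (a : ℕ) ≤ n + 1 from by omega)]
            unfold coefQ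
            split_ifs <;> first | rfl | omega
          · rw [if_neg (show ¬ (a : ℕ) ≤ n + 1 from by omega)]

lemma Umat_succ_entry (γ : ℕ → ℕ → ℂ) (d k : ℕ) (a : Fin (d + 2)) :
    Umat γ (d + 1) k a 0 =
      ∑ b : Fin (d + 1), coefQ γ k (d + 1) (a : ℕ) (b : ℕ) * Umat γ d (k + 1) b 0 := by
  conv_lhs => rw [Umat]
  rw [Matrix.mul_apply]
  rw [Fin.sum_univ_castSucc]
  have hR : ∀ c : Fin (d + 2),
      (Matrix.reindex finSumFinEquiv finSumFinEquiv
        (Matrix.fromBlocks (Umat γ d (k + 1)) 0 0 (1 : Matrix (Fin 1) (Fin 1) ℂ))) c 0 =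
      (Matrix.fromBlocks (Umat γ d (k + 1)) 0 0 (1 : Matrix (Fin 1) (Fin 1) ℂ))
        (finSumFinEquiv.symm c) (finSumFinEquiv.symm 0) := fun c => rfl
  have h0 : ((finSumFinEquiv (m := d + 1) (n := 1)).symm (0 : Fin (d + 2)))
      = Sum.inl (0 : Fin (d + 1)) := by
    have h : (0 : Fin (d + 2)) = Fin.castAdd 1 (0 : Fin (d + 1)) := rfl
    rw [h, finSumFinEquiv_symm_apply_castAdd]
  have hlast : (Fin.last (d + 1) : Fin (d + 2)) = ⟨d + 1, by omega⟩ := rfl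
  have hzero : (((List.range (d + 1)).map fun r =>
        juliaEmb (d + 2) r (γ k (k + r + 1))).prod) a (Fin.last (d + 1)) *
      (Matrix.reindex finSumFinEquiv finSumFinEquiv
        (Matrix.fromBlocks (Umat γ d (k + 1)) 0 0 (1 : Matrix (Fin 1) (Fin 1) ℂ)))
        (Fin.last (d + 1)) 0 = 0 := by
    rw [hR, h0, finSumFinEquiv_symm_last, Matrix.fromBlocks_apply₂₁]
    simp
  rw [hzero, add_zero]
  refine Finset.sum_congr rfl fun b _ => ?_
  rw [hR, h0]
  have hcs : ((finSumFinEquiv (m := d + 1) (n := 1)).symm (Fin.castSucc b)) = Sum.inl b := by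
    have h : Fin.castSucc b = Fin.castAdd 1 b := rfl
    rw [h, finSumFinEquiv_symm_apply_castAdd]
  rw [hcs, Matrix.fromBlocks_apply₁₁,
    Qpart_entry γ k d (d + 1) le_rfl a (Fin.castSucc b),
    if_pos (show (a : ℕ) ≤ d + 1 from by omega), Fin.coe_castSucc]

lemma risesCt_all_true {S : ℕ → Bool} {t : ℕ} (h : ∀ r < t, S r = true) :
    risesCt S t = t := by
  induction t with
  | zero => simp [risesCt]
  | succ t ih =>
    rw [risesCt_succ, ih (fun r hr => h r (by omega)), h t (by omega)]
    simp

lemma fallsCt_all_true {S : ℕ → Bool} {t : ℕ} (h : ∀ r < t, S r = true) :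
    fallsCt S t = 0 := by
  induction t with
  | zero => simp [fallsCt]
  | succ t ih =>
    rw [fallsCt_succ, ih (fun r hr => h r (by omega)), h t (by omega)]
    simp

lemma hgt_all_true {S : ℕ → Bool} {t : ℕ} (h : ∀ r < t, S r = true) :
    hgt S t = t := by
  rw [hgt_eq_sub, risesCt_all_true h, fallsCt_all_true h]
  simp

lemma counts_shift {S S' : ℕ → Bool} {t : ℕ}
    (h1 : ∀ r < t, S r = true) (h2 : S t = false)
    (h3 : ∀ r, S (t + 1 + r) = S' r) (y : ℕ) :
    fallsCt S (t + 1 + y) = 1 + fallsCt S' y ∧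
      risesCt S (t + 1 + y) = t + risesCt S' y := by
  induction y with
  | zero =>
    constructor
    · rw [show t + 1 + 0 = t + 1 from rfl, fallsCt_succ, fallsCt_all_true h1, h2]
      simp [fallsCt]
    · rw [show t + 1 + 0 = t + 1 from rfl, risesCt_succ, risesCt_all_true h1, h2]
      simp [risesCt]
  | succ y ih =>
    have e : t + 1 + (y + 1) = (t + 1 + y) + 1 := by omega
    rw [e, fallsCt_succ, risesCt_succ, ih.1, ih.2, fallsCt_succ, risesCt_succ,
      h3 y]
    omega

lemma hgt_shift {S S' : ℕ → Bool} {t a b : ℕ}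
    (h1 : ∀ r < t, S r = true) (h2 : S t = false)
    (h3 : ∀ r, S (t + 1 + r) = S' r) (hb : a + t = b + 1) (y : ℕ) :
    (a : ℤ) + hgt S (t + 1 + y) = (b : ℤ) + hgt S' y := by
  have hc := counts_shift h1 h2 h3 y
  rw [hgt_eq_sub, hgt_eq_sub, hc.1, hc.2]
  have : (a : ℤ) + t = (b : ℤ) + 1 := by exact_mod_cast congrArg (Nat.cast : ℕ → ℤ) hb
  push_cast
  omega

lemma wgt_shift (γ : ℕ → ℕ → ℂ) (k : ℕ) {S S' : ℕ → Bool} {t a b : ℕ}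
    (h1 : ∀ r < t, S r = true) (h2 : S t = false)
    (h3 : ∀ r, S (t + 1 + r) = S' r) (hb : a + t = b + 1) (y : ℕ) :
    wgt γ k a S (t + 1 + y) = wgt γ (k + 1) b S' y := by
  have hc := counts_shift h1 h2 h3 y
  have hH := hgt_shift h1 h2 h3 hb y
  have hi : k + fallsCt S (t + 1 + y) = k + 1 + fallsCt S' y := by rw [hc.1]; omega
  have hj : k + a + risesCt S (t + 1 + y) = k + 1 + b + risesCt S' y := by
    rw [hc.2]; omega
  have hprev : prevb S (t + 1 + y) = prevb S' y := by
    unfold prevb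
    rcases Nat.eq_zero_or_pos y with hy | hy
    · subst hy
      rw [if_neg (by omega), if_pos rfl, show t + 1 + 0 - 1 = t from by omega, h2]
    · rw [if_neg (by omega), if_neg (by omega),
        show t + 1 + y - 1 = t + 1 + (y - 1) from by omega, h3]
  have hcur : S (t + 1 + y) = S' y := h3 y
  unfold wgt
  rw [hH, hi, hj, hprev, hcur]

lemma valid_shift {S S' : ℕ → Bool} {t a b L L' : ℕ}
    (h1 : ∀ r < t, S r = true) (h2 : S t = false)
    (h3 : ∀ r, S (t + 1 + r) = S' r) (hb : a + t = b + 1) (hL : L = t + 1 + L') :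
    ValidP a L S ↔ ValidP b L' S' := by
  subst hL
  constructor
  · rintro ⟨hend, hnn⟩
    refine ⟨by rw [← hgt_shift h1 h2 h3 hb L']; exact hend, fun y hy => ?_⟩
    rw [← hgt_shift h1 h2 h3 hb y]
    exact hnn (t + 1 + y) (by omega)
  · rintro ⟨hend, hnn⟩
    refine ⟨by rw [hgt_shift h1 h2 h3 hb L']; exact hend, fun y hy => ?_⟩
    rcases Nat.lt_or_ge y (t + 1) with hy' | hy'
    · rw [hgt_all_true (fun r hr => h1 r (by omega))]
      positivity
    · have : y = t + 1 + (y - t - 1) := by omega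
      rw [this, hgt_shift h1 h2 h3 hb]
      exact hnn (y - t - 1) (by omega)

lemma wgt_zero_true (γ : ℕ → ℕ → ℂ) (k a : ℕ) {S : ℕ → Bool} (h : S 0 = true) :
    wgt γ k a S 0 = if a = 0 then 1 else -conj (γ k (k + a)) := by
  unfold wgt prevb
  have h0 : hgt S 0 = 0 := by simp [hgt]
  have hr : risesCt S 0 = 0 := by simp [risesCt]
  have hf : fallsCt S 0 = 0 := by simp [fallsCt]
  rw [h0, hr, hf, h]
  by_cases ha : a = 0
  · rw [if_pos (by simp [ha]), if_pos ha]
  · rw [if_neg (by simpa using ha), if_neg ha]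
    simp

lemma wgt_zero_false (γ : ℕ → ℕ → ℂ) (k a : ℕ) {S : ℕ → Bool} (h : S 0 = false)
    (ha : a ≠ 0) : wgt γ k a S 0 = defect (γ k (k + a)) := by
  unfold wgt prevb
  have h0 : hgt S 0 = 0 := by simp [hgt]
  have hr : risesCt S 0 = 0 := by simp [risesCt]
  have hf : fallsCt S 0 = 0 := by simp [fallsCt]
  rw [h0, hr, hf, h]
  rw [if_neg (by simpa using ha)]
  simp

lemma wgt_rise (γ : ℕ → ℕ → ℂ) (k a : ℕ) {S : ℕ → Bool} {y : ℕ} (hy : 1 ≤ y)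
    (hall : ∀ r < y, S r = true) (hcur : S y = true) (hne : a + y ≠ 0) :
    wgt γ k a S y = defect (γ k (k + a + y)) := by
  unfold wgt prevb
  rw [hgt_all_true hall, risesCt_all_true hall, fallsCt_all_true hall, hcur,
    if_neg (by omega), if_neg (show ¬ (y = 0) from by omega),
    hall (y - 1) (by omega)]
  simp [Nat.add_zero]

lemma wgt_peak (γ : ℕ → ℕ → ℂ) (k a : ℕ) {S : ℕ → Bool} {t : ℕ} (hy : 1 ≤ t)
    (hall : ∀ r < t, S r = true) (hcur : S t = false) :
    wgt γ k a S t = γ k (k + a + t) := by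
  unfold wgt prevb
  rw [hgt_all_true hall, risesCt_all_true hall, fallsCt_all_true hall, hcur,
    if_neg (by omega), if_neg (show ¬ (t = 0) from by omega),
    hall (t - 1) (by omega)]
  simp [Nat.add_zero]

lemma prefix_prod (γ : ℕ → ℕ → ℂ) (k a t D : ℕ) {S : ℕ → Bool}
    (h1 : ∀ r < t, S r = true) (h2 : S t = false) (ht : 1 ≤ a + t)
    (hD : a + t - 1 < D) :
    ∏ y ∈ Finset.range (t + 1), wgt γ k a S y = coefQ γ k D a (a + t - 1) := by
  rcases Nat.eq_zero_or_pos t with ht0 | htpos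
  · subst ht0
    rw [Finset.prod_range_one, wgt_zero_false γ k a h2 (by omega)]
    unfold coefQ
    rw [if_pos (show a + 0 - 1 + 1 = a from by omega)]
  · obtain ⟨u, rfl⟩ : ∃ u, t = u + 1 := ⟨t - 1, by omega⟩
    rw [Finset.prod_range_succ, Finset.prod_range_succ',
      wgt_peak γ k a (by omega) h1 h2, wgt_zero_true γ k a (h1 0 (by omega))]
    have hmid : ∀ i ∈ Finset.range u, wgt γ k a S (i + 1) = defect (γ k (k + a + i + 1)) := by
      intro i hi
      simp only [Finset.mem_range] at hi
      rw [wgt_rise γ k a (by omega) (fun r hr => h1 r (by omega))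
        (h1 (i + 1) (by omega)) (by omega)]
      rfl
    rw [Finset.prod_congr rfl hmid]
    unfold coefQ
    rw [if_neg (show ¬ (a + (u + 1) - 1 + 1 = a) from by omega),
      if_pos (show a ≤ a + (u + 1) - 1 ∧ a + (u + 1) - 1 ≤ D from ⟨by omega, by omega⟩),
      if_neg (show ¬ (a + (u + 1) - 1 = D) from by omega),
      Finset.prod_Ico_eq_prod_range]
    have e1 : a + (u + 1) - 1 - a = u := by omega
    have e2 : ∀ i ∈ Finset.range u,
        defect (γ k (k + (a + i) + 1)) = defect (γ k (k + a + i + 1)) := by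
      intro i _
      rw [show k + (a + i) + 1 = k + a + i + 1 from by omega]
    rw [e1, Finset.prod_congr rfl e2]
    have e3 : γ k (k + (a + (u + 1) - 1) + 1) = γ k (k + a + (u + 1)) := by
      rw [show k + (a + (u + 1) - 1) + 1 = k + a + (u + 1) from by omega]
    rw [e3]
    ring

noncomputable def ffN (S : ℕ → Bool) : ℕ := sInf {y | S y = false}

lemma ffN_spec {S : ℕ → Bool} (h : ∃ y, S y = false) : S (ffN S) = false :=
  Nat.sInf_mem h

lemma ffN_lt_true {S : ℕ → Bool} {y : ℕ} (hy : y < ffN S) : S y = true := by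
  have h := Nat.notMem_of_lt_sInf hy
  simp only [Set.mem_setOf_eq] at h
  simpa using h

lemma ffN_eq {S : ℕ → Bool} {t : ℕ} (h2 : S t = false) (h1 : ∀ r < t, S r = true) :
    ffN S = t := by
  refine le_antisymm (Nat.sInf_le h2) ?_
  by_contra h
  push_neg at h
  have hsp := ffN_spec ⟨t, h2⟩
  rw [h1 _ h] at hsp
  exact absurd hsp (by simp)

lemma valid_exists_false {a L : ℕ} {S : ℕ → Bool} (hv : ValidP a L S) (hL : 1 ≤ L) :
    ∃ y, S y = false := by
  by_contra h
  push_neg at h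
  have hall : ∀ r < L, S r = true := fun r _ => by
    have hh := h r
    simpa using hh
  have h1 := hgt_all_true hall
  have h2 := hv.1
  rw [h1] at h2
  omega

lemma ffN_lt_len {a L : ℕ} {S : ℕ → Bool} (hv : ValidP a L S) (hL : 1 ≤ L) :
    ffN S < L := by
  by_contra h
  push_neg at h
  have hall : ∀ r < L, S r = true := fun r hr => ffN_lt_true (by omega)
  have h1 := hgt_all_true hall
  have h2 := hv.1
  rw [h1] at h2
  omega

lemma ffN_pos_of_azero {L : ℕ} {S : ℕ → Bool} (hv : ValidP 0 L S) (hL : 1 ≤ L) :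
    1 ≤ ffN S := by
  by_contra h
  push_neg at h
  have h0 : S 0 = false := by
    have hsp := ffN_spec (valid_exists_false hv hL)
    rwa [show ffN S = 0 from by omega] at hsp
  have hnn := hv.2 1 hL
  rw [hgt_succ] at hnn
  simp [hgt, h0] at hnn

lemma ffN_bound {a d : ℕ} {S : ℕ → Bool} (hv : ValidP a (2 * (d + 1) - a) S)
    (ha : a ≤ d + 1) : a + ffN S ≤ d + 1 := by
  have hL : 1 ≤ 2 * (d + 1) - a := by omega
  have ht := ffN_lt_len hv hL
  have hall : ∀ r < ffN S, S r = true := fun r hr => ffN_lt_true hr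
  have h1 := hgt_all_true hall
  have hlip := (hgt_lipschitz S (le_of_lt ht)).2
  have h2 := hv.1
  omega

def shiftMap (t N M : ℕ) (hNM : N = t + 1 + M) (s : Fin N → Bool) : Fin M → Bool :=
  fun y => s ⟨t + 1 + y, by have := y.isLt; omega⟩

def unshiftMap (t N M : ℕ) (hNM : N = t + 1 + M) (s' : Fin M → Bool) : Fin N → Bool :=
  fun y => if h1 : (y : ℕ) < t then true
    else if h2 : (y : ℕ) = t then false
    else s' ⟨(y : ℕ) - (t + 1), by have := y.isLt; omega⟩

lemma sext_shiftMap (t N M : ℕ) (hNM : N = t + 1 + M) (s : Fin N → Bool) (r : ℕ) :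
    sext (shiftMap t N M hNM s) r = sext s (t + 1 + r) := by
  unfold sext shiftMap
  by_cases hr : r < M
  · rw [dif_pos hr, dif_pos (by omega)]
  · rw [dif_neg hr, dif_neg (by omega)]

lemma sext_unshiftMap_lt (t N M : ℕ) (hNM : N = t + 1 + M) (s' : Fin M → Bool) {r : ℕ}
    (hr : r < t) : sext (unshiftMap t N M hNM s') r = true := by
  unfold sext unshiftMap
  rw [dif_pos (by omega)]
  rw [dif_pos (by simpa using hr)]

lemma sext_unshiftMap_t (t N M : ℕ) (hNM : N = t + 1 + M) (s' : Fin M → Bool) :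
    sext (unshiftMap t N M hNM s') t = false := by
  unfold sext unshiftMap
  rw [dif_pos (by omega)]
  rw [dif_neg (by simp), dif_pos (by simp)]

lemma sext_unshiftMap_shift (t N M : ℕ) (hNM : N = t + 1 + M) (s' : Fin M → Bool)
    (r : ℕ) : sext (unshiftMap t N M hNM s') (t + 1 + r) = sext s' r := by
  unfold sext unshiftMap
  by_cases hr : r < M
  · rw [dif_pos (show t + 1 + r < N from by omega)]
    beta_reduce
    rw [dif_neg (show ¬ ((⟨t + 1 + r, by omega⟩ : Fin N) : ℕ) < t from by simp; omega),
      dif_neg (show ¬ ((⟨t + 1 + r, by omega⟩ : Fin N) : ℕ) = t from by simp; omega),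
      dif_pos hr]
    congr 1
    exact Fin.ext (by simp)
  · rw [dif_neg (by omega), dif_neg hr]

lemma unshift_shift (t N M : ℕ) (hNM : N = t + 1 + M) (s : Fin N → Bool)
    (h1 : ∀ r < t, sext s r = true) (h2 : sext s t = false) :
    unshiftMap t N M hNM (shiftMap t N M hNM s) = s := by
  funext y
  unfold unshiftMap shiftMap
  by_cases hy1 : (y : ℕ) < t
  · rw [dif_pos hy1]
    have := h1 (y : ℕ) hy1
    unfold sext at this
    rw [dif_pos y.isLt] at this
    simpa using this.symm
  · rw [dif_neg hy1]
    by_cases hy2 : (y : ℕ) = t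
    · rw [dif_pos hy2]
      unfold sext at h2
      rw [dif_pos (by omega)] at h2
      rw [← h2]
      congr 1
      exact Fin.ext (by simpa using hy2.symm)
    · rw [dif_neg hy2]
      congr 1
      exact Fin.ext (by simp; omega)

lemma shift_unshift (t N M : ℕ) (hNM : N = t + 1 + M) (s' : Fin M → Bool) :
    shiftMap t N M hNM (unshiftMap t N M hNM s') = s' := by
  funext y
  unfold unshiftMap shiftMap
  beta_reduce
  rw [dif_neg (show ¬ ((⟨t + 1 + (y : ℕ), by have := y.isLt; omega⟩ : Fin N) : ℕ) < t from
      by simp; omega),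
    dif_neg (show ¬ ((⟨t + 1 + (y : ℕ), by have := y.isLt; omega⟩ : Fin N) : ℕ) = t from
      by simp; omega)]
  congr 1
  exact Fin.ext (by simp)

lemma Bsum_succ (γ : ℕ → ℕ → ℂ) (d k a : ℕ) (ha : a ≤ d + 1) :
    Bsum γ (d + 1) k a =
      ∑ b : Fin (d + 1), coefQ γ k (d + 1) a (b : ℕ) * Bsum γ d (k + 1) (b : ℕ) := by
  classical
  rw [← Finset.sum_range (fun b => coefQ γ k (d + 1) a b * Bsum γ d (k + 1) b)]
  unfold Bsum
  have hmaps : ∀ s ∈ Finset.univ.filter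
      (fun s : Fin (2 * (d + 1) - a) → Bool => ValidP a (2 * (d + 1) - a) (sext s)),
      (fun s : Fin (2 * (d + 1) - a) → Bool => a + ffN (sext s) - 1) s ∈
        Finset.range (d + 1) := by
    intro s hs
    rw [Finset.mem_filter] at hs
    have hv := hs.2
    have hbd := ffN_bound hv ha
    have hpos : 1 ≤ a + ffN (sext s) := by
      rcases Nat.eq_zero_or_pos a with h0 | h0
      · subst h0
        simpa using ffN_pos_of_azero hv (by omega)
      · omega
    simp only [Finset.mem_range]
    omega
  rw [← Finset.sum_fiberwise_of_maps_to hmaps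
    (fun s => ∏ y ∈ Finset.range (2 * (d + 1) - a), wgt γ k a (sext s) y)]
  refine Finset.sum_congr rfl fun b hb => ?_
  rw [Finset.mem_range] at hb
  rw [Finset.filter_filter]
  by_cases hab : b + 1 < a
  · rw [show coefQ γ k (d + 1) a b = 0 from by
      unfold coefQ
      rw [if_neg (show ¬ (b + 1 = a) from by omega),
        if_neg (show ¬ (a ≤ b ∧ b ≤ d + 1) from by omega)], zero_mul]
    rw [show (Finset.univ.filter fun s : Fin (2 * (d + 1) - a) → Bool =>
        ValidP a (2 * (d + 1) - a) (sext s) ∧ a + ffN (sext s) - 1 = b) = ∅ from by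
      rw [Finset.filter_eq_empty_iff]
      rintro s - ⟨hv, hfib⟩
      omega]
    exact Finset.sum_empty
  · set t := b + 1 - a with htdef
    have hba : a + t = b + 1 := by omega
    have htL : 2 * (d + 1) - a = t + 1 + (2 * d - b) := by omega
    have hfacts : ∀ s : Fin (2 * (d + 1) - a) → Bool,
        ValidP a (2 * (d + 1) - a) (sext s) → a + ffN (sext s) - 1 = b →
        (∀ r < t, sext s r = true) ∧ sext s t = false := by
      intro s hv hfib
      have hpos : 1 ≤ a + ffN (sext s) := by
        rcases Nat.eq_zero_or_pos a with h0 | h0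
        · subst h0
          simpa using ffN_pos_of_azero hv (by omega)
        · omega
      have hteq : ffN (sext s) = t := by omega
      exact ⟨fun r hr => ffN_lt_true (by omega),
        by rw [← hteq]; exact ffN_spec (valid_exists_false hv (by omega))⟩
    rw [Finset.mul_sum]
    refine Finset.sum_nbij' (shiftMap t _ _ htL) (unshiftMap t _ _ htL) ?_ ?_ ?_ ?_ ?_
    · intro s hs
      simp only [Finset.mem_filter, Finset.mem_univ, true_and] at hs ⊢
      obtain ⟨hv, hfib⟩ := hs
      obtain ⟨h1, h2⟩ := hfacts s hv hfib
      exact (valid_shift h1 h2 (fun r => (sext_shiftMap t _ _ htL s r).symm) hba htL).mp hv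
    · intro s' hs'
      simp only [Finset.mem_filter, Finset.mem_univ, true_and] at hs' ⊢
      have h1 : ∀ r < t, sext (unshiftMap t _ _ htL s') r = true :=
        fun r hr => sext_unshiftMap_lt t _ _ htL s' hr
      have h2 := sext_unshiftMap_t t _ _ htL s'
      have h3 := sext_unshiftMap_shift t _ _ htL s'
      refine ⟨(valid_shift h1 h2 h3 hba htL).mpr hs', ?_⟩
      rw [ffN_eq h2 h1]
      omega
    · intro s hs
      simp only [Finset.mem_filter, Finset.mem_univ, true_and] at hs
      obtain ⟨hv, hfib⟩ := hs
      obtain ⟨h1, h2⟩ := hfacts s hv hfib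
      exact unshift_shift t _ _ htL s h1 h2
    · intro s' _
      exact shift_unshift t _ _ htL s'
    · intro s hs
      simp only [Finset.mem_filter, Finset.mem_univ, true_and] at hs
      obtain ⟨hv, hfib⟩ := hs
      obtain ⟨h1, h2⟩ := hfacts s hv hfib
      have h3 : ∀ r, sext s (t + 1 + r) = sext (shiftMap t _ _ htL s) r :=
        fun r => (sext_shiftMap t _ _ htL s r).symm
      rw [show Finset.range (2 * (d + 1) - a) = Finset.range (t + 1 + (2 * d - b)) from
        by rw [← htL], Finset.prod_range_add,
        prefix_prod γ k a t (d + 1) h1 h2 (by omega) (by omega),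
        show a + t - 1 = b from by omega]
      congr 1
      exact Finset.prod_congr rfl fun y _ => wgt_shift γ k h1 h2 h3 hba y

lemma Umat_eq_Bsum (γ : ℕ → ℕ → ℂ) : ∀ (d k : ℕ) (a : Fin (d + 1)),
    Umat γ d k a 0 = Bsum γ d k (a : ℕ) := by
  intro d
  induction d with
  | zero =>
    intro k a
    have ha : a = 0 := Fin.ext (by omega)
    subst ha
    rw [show Umat γ 0 k = 1 from rfl, Matrix.one_apply_eq]
    unfold Bsum
    rw [Finset.filter_true_of_mem (fun s _ => ⟨by simp [hgt], fun y hy => by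
      have hy0 : y = 0 := by omega
      subst hy0
      simp [hgt]⟩)]
    simp
  | succ d ih =>
    intro k a
    rw [Umat_succ_entry γ d k a, Bsum_succ γ d k (a : ℕ) (by have := a.isLt; omega)]
    exact Finset.sum_congr rfl fun b _ => by rw [ih (k + 1) b]

lemma prod_wgt_eq_pathWeight (γ : ℕ → ℕ → ℂ) (l d : ℕ) {S : ℕ → Bool}
    (hv : ValidP 0 (2 * d) S) :
    ∏ y ∈ Finset.range (2 * d), wgt γ l 0 S y =
      ∏ i ∈ Finset.Ico l (l + d), ∏ j ∈ Finset.Ioc i (l + d), pathWeight γ l S i j := by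
  classical
  have hend : hgt S (2 * d) = 0 := by have h := hv.1; omega
  have hnn : ∀ y ≤ 2 * d, 0 ≤ hgt S y := fun y hy => by have h := hv.2 y hy; omega
  have hfacts : ∀ y, y ∈ Finset.range (2 * d) → hgt S y ≠ 0 →
      1 ≤ y ∧ y < 2 * d ∧ 1 ≤ hgt S y ∧ hgt S y ≤ 2 * d - y ∧
        hgt S y = (risesCt S y : ℤ) - fallsCt S y ∧ risesCt S y + fallsCt S y = y := by
    intro y hy hne
    rw [Finset.mem_range] at hy
    have h1 : 1 ≤ hgt S y := by
      have := hnn y (by omega)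
      omega
    have hy1 : 1 ≤ y := by
      by_contra h
      have hy0 : y = 0 := by omega
      rw [hy0] at hne
      exact hne (by simp [hgt])
    have hlip := (hgt_lipschitz S (show y ≤ 2 * d from by omega)).2
    rw [hend] at hlip
    exact ⟨hy1, hy, h1, by push_cast at hlip ⊢; omega, hgt_eq_sub S y,
      risesCt_add_fallsCt S y⟩
  rw [Finset.prod_sigma']
  have hL : ∏ y ∈ Finset.range (2 * d), wgt γ l 0 S y
      = ∏ y ∈ (Finset.range (2 * d)).filter (fun y => hgt S y ≠ 0), wgt γ l 0 S y := by
    refine (Finset.prod_subset (Finset.filter_subset _ _) fun y hy hny => ?_).symm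
    rw [Finset.mem_filter, not_and] at hny
    have h0 : hgt S y = 0 := by
      by_contra h
      exact (hny hy) h
    unfold wgt
    rw [if_pos (by rw [h0]; simp)]
  have hR : ∏ p ∈ (Finset.Ico l (l + d)).sigma (fun i => Finset.Ioc i (l + d)),
        pathWeight γ l S p.1 p.2
      = ∏ p ∈ ((Finset.Ico l (l + d)).sigma (fun i => Finset.Ioc i (l + d))).filter
          (fun p => hgt S (p.2 + p.1 - 2 * l) = (p.2 : ℤ) - (p.1 : ℤ)),
          pathWeight γ l S p.1 p.2 := by
    refine (Finset.prod_subset (Finset.filter_subset _ _) fun p hp hnp => ?_).symm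
    rw [Finset.mem_filter, not_and] at hnp
    have h0 := hnp hp
    unfold pathWeight
    rw [if_neg h0]
  rw [hL, hR]
  refine Finset.prod_nbij' (fun y => ⟨l + fallsCt S y, l + risesCt S y⟩)
    (fun p => p.2 + p.1 - 2 * l) ?_ ?_ ?_ ?_ ?_
  · intro y hy
    rw [Finset.mem_filter] at hy
    obtain ⟨hy1, hylt, hh1, hh2, hh3, hh4⟩ := hfacts y hy.1 hy.2
    simp only [Finset.mem_filter, Finset.mem_sigma, Finset.mem_Ico, Finset.mem_Ioc]
    refine ⟨⟨⟨by omega, by omega⟩, by omega, by omega⟩, ?_⟩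
    rw [show l + risesCt S y + (l + fallsCt S y) - 2 * l = y from by omega]
    push_cast
    omega
  · intro p hp
    rw [Finset.mem_filter] at hp
    obtain ⟨hps, hcond⟩ := hp
    rw [Finset.mem_sigma, Finset.mem_Ico, Finset.mem_Ioc] at hps
    simp only [Finset.mem_filter, Finset.mem_range]
    constructor
    · omega
    · rw [hcond]
      have : (p.1 : ℤ) < (p.2 : ℤ) := by exact_mod_cast hps.2.1
      omega
  · intro y hy
    rw [Finset.mem_filter] at hy
    obtain ⟨hy1, hylt, hh1, hh2, hh3, hh4⟩ := hfacts y hy.1 hy.2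
    show l + risesCt S y + (l + fallsCt S y) - 2 * l = y
    omega
  · intro p hp
    rw [Finset.mem_filter] at hp
    obtain ⟨hps, hcond⟩ := hp
    rw [Finset.mem_sigma, Finset.mem_Ico, Finset.mem_Ioc] at hps
    obtain ⟨⟨hil, hiu⟩, hji, hju⟩ := hps
    have hy := hfacts (p.2 + p.1 - 2 * l)
      (by rw [Finset.mem_range]; omega)
      (by
        rw [hcond]
        have h5 : (p.1 : ℤ) < (p.2 : ℤ) := by exact_mod_cast hji
        omega)
    obtain ⟨hy1, hylt, hh1, hh2, hh3, hh4⟩ := hy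
    rw [hcond] at hh3
    obtain ⟨i, j⟩ := p
    simp only at hh3 hh4 hji hju hil hiu ⊢
    have hfalls : l + fallsCt S (j + i - 2 * l) = i := by omega
    have hrises : l + risesCt S (j + i - 2 * l) = j := by omega
    refine Sigma.ext ?_ ?_ <;> simp only [heq_eq_eq]
    · exact hfalls
    · exact hrises
  · intro y hy
    rw [Finset.mem_filter] at hy
    obtain ⟨hy1, hylt, hh1, hh2, hh3, hh4⟩ := hfacts y hy.1 hy.2
    unfold wgt pathWeight prevb
    rw [show l + risesCt S y + (l + fallsCt S y) - 2 * l = y from by omega]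
    rw [if_neg (show ¬ ((0 : ℕ) : ℤ) + hgt S y = 0 from by push_cast; omega),
      if_pos (show hgt S y = ((l + risesCt S y : ℕ) : ℤ) - ((l + fallsCt S y : ℕ) : ℤ)
        from by push_cast; omega),
      if_neg (show ¬ (y = 0) from by omega),
      show l + 0 + risesCt S y = l + risesCt S y from by omega]

lemma Bsum_eq_target (γ : ℕ → ℕ → ℂ) (l d : ℕ) :
    Bsum γ d l 0 =
      ∑ s ∈ Finset.univ.filter (IsDyckFun (2 * d)),
        ∏ i ∈ Finset.Ico l (l + d), ∏ j ∈ Finset.Ioc i (l + d),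
          pathWeight γ l (sext s) i j := by
  classical
  unfold Bsum
  show (∑ s ∈ Finset.univ.filter
      (fun s : Fin (2 * d) → Bool => ValidP 0 (2 * d) (sext s)),
      ∏ y ∈ Finset.range (2 * d), wgt γ l 0 (sext s) y) = _
  have hiff : ∀ s : Fin (2 * d) → Bool,
      ValidP 0 (2 * d) (sext s) ↔ IsDyckFun (2 * d) s := by
    intro s
    unfold ValidP IsDyckFun
    constructor
    · rintro ⟨h1, h2⟩
      refine ⟨by omega, fun jf => ?_⟩
      have h3 := h2 (jf : ℕ) (by have := jf.isLt; omega)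
      omega
    · rintro ⟨h1, h2⟩
      refine ⟨by omega, fun y hy => ?_⟩
      have h3 := h2 ⟨y, by omega⟩
      simp only [Fin.val_mk] at h3
      omega
  rw [Finset.filter_congr (fun s _ => hiff s)]
  refine Finset.sum_congr rfl fun s hs => ?_
  rw [Finset.mem_filter] at hs
  exact prod_wgt_eq_pathWeight γ l d ((hiff s).mpr hs.2)

end Stmt18Aux

/-- Theorem 2.2 (cumulant-type formula): for a scalar positive definite kernel `K` on `ℕ`
with unit diagonal whose Schur parameters are `γ_{k,j}` (so that
`K(l,m) = (U_{l,m})_{0,0}` via the transmission-line structure theorem), one has, for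
`l < m`, `K(l,m) = Σ_{q ∈ D^l_m} Π_{l ≤ i < j ≤ m} a_{i,j}(q)`, the sum being over the
Dyck subpaths `q` starting at `(2l,0)`, i.e. Dyck paths of length `2(m-l)`. -/


theorem stmt18 (K : ℕ → ℕ → ℂ) (γ : ℕ → ℕ → ℂ)
    (hpd : IsPDKernelN K) (hdiag : ∀ l, K l l = 1)
    (hherm : ∀ l m, K m l = conj (K l m))
    (hnorm : ∀ k j, ‖γ k j‖ ≤ 1) (hγdiag : ∀ k, γ k k = 0)
    (hstruct : ∀ l m : ℕ, l ≤ m → K l m = Umat γ (m - l) l 0 0) :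
    ∀ l m : ℕ, l < m →
      K l m = ∑ s ∈ Finset.univ.filter (IsDyckFun (2 * (m - l))),
        ∏ i ∈ Finset.Ico l m, ∏ j ∈ Finset.Ioc i m, pathWeight γ l (sext s) i j := by
  intro l m hlm
  obtain ⟨d, rfl⟩ : ∃ d, m = l + d := ⟨m - l, by omega⟩
  rw [hstruct l (l + d) (by omega)]
  rw [show l + d - l = d from by omega]
  rw [Stmt18Aux.Umat_eq_Bsum γ d l 0]
  rw [show (((0 : Fin (d + 1))) : ℕ) = 0 from rfl]
  exact Stmt18Aux.Bsum_eq_target γ l d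
end
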